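/- arXiv:2412.16549 — 6 statements merged into one kernel-verified Lean document; each statement's English description precedes it below -/
import Mathlib

section
/- Let (X,d) be a discrete metric space of bounded geometry. If X has Yu's property A, then X has naive property A; that is, for any R, ε > 0 there exists a family {Ã_x}_{x∈X} of finite non-empty subsets of X itself and an S > 0 such that |Ã_x △ Ã_y| / |Ã_x ∩ Ã_y| < ε whenever d(x,y) ≤ R, and Ã_x ⊆ B(x,S) for all x ∈ X. -/
/-!
Record the fibre sizes `m_x(z)` of a property A set `A_x ⊆ X × ℕ` and rescale them to
`n_x(z) = ⌈K m_x(z) / |A_x|⌉`. Replace the fibre over `z` by the first `n_x(z)` points of a list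
of `K` distinct points near `z`; bounded geometry lets these lists be chosen greedily (along a
well-order of `X`) so that the lists of nearby centres are disjoint. The resulting sets
`Ã_x ⊆ X` are then almost invariant because `A_x` is, up to a rounding error of one point per
centre, which is negligible once `K` is large.

Such lists exist near `x` as soon as `x` reaches more than `Q` points by `Q` steps of length at
most `R`. Otherwise the `R`-chain component of `x` has at most `Q` points, and that component
itself serves as `Ã_x`.
-/

/-- A metric space is (uniformly) discrete if the distances between distinct points
are bounded below by a positive constant. -/
def UniformlyDiscrete (X : Type*) [MetricSpace X] : Prop :=
  ∃ c : ℝ, 0 < c ∧ ∀ x y : X, x ≠ y → c ≤ dist x y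

/-- A metric space has bounded geometry if for every `R > 0` the closed balls of radius `R`
are finite, of uniformly bounded cardinality. -/
def BoundedGeometry (X : Type*) [MetricSpace X] : Prop :=
  ∀ R : ℝ, 0 < R → ∃ N : ℕ, ∀ x : X,
    (Metric.closedBall x R).Finite ∧ (Metric.closedBall x R).ncard ≤ N

/-- Yu's property A. -/
def HasPropertyA (X : Type*) [MetricSpace X] [DecidableEq X] : Prop :=
  ∀ R : ℝ, 0 < R → ∀ ε : ℝ, 0 < ε →
    ∃ (A : X → Finset (X × ℕ)) (S : ℝ), 0 < S ∧
      (∀ x : X, (A x).Nonempty) ∧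
      (∀ x y : X, dist x y ≤ R →
        ((symmDiff (A x) (A y)).card : ℝ) < ε * ((A x ∩ A y).card : ℝ)) ∧
      (∀ x : X, ∀ p ∈ A x, dist x p.1 ≤ S)

open Finset
open scoped symmDiff

theorem Finset.isFixedPt_iterate_or_add_card_le {X : Type*} {f : Finset X → Finset X}
    (hf : ∀ s, s ⊆ f s) (s : Finset X) (k : ℕ) :
    Function.IsFixedPt f (f^[k] s) ∨ k + #s ≤ #(f^[k] s) := by
  induction k with
  | zero => simp
  | succ k ih =>
    rw [Function.iterate_succ_apply']
    by_cases hfix : Function.IsFixedPt f (f (f^[k] s))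
    · exact .inl hfix
    have hk : ¬ Function.IsFixedPt f (f^[k] s) := fun h => hfix (by rwa [h.eq])
    have := card_lt_card ((hf _).ssubset_of_ne (Ne.symm hk))
    have := ih.resolve_left hk
    exact .inr (by omega)

theorem Finset.subset_biUnion_of_forall_mem_self {X : Type*} [DecidableEq X] {B : X → Finset X}
    (hB : ∀ x, x ∈ B x) (s : Finset X) : s ⊆ s.biUnion B :=
  fun x hx => mem_biUnion.2 ⟨x, hx, hB x⟩

theorem Finset.card_symmDiff {α : Type*} [DecidableEq α] (s t : Finset α) :
    #(s ∆ t) = #(s \ t) + #(t \ s) :=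
  card_union_of_disjoint disjoint_sdiff_sdiff

theorem Finset.abs_card_sub_card_le_card_symmDiff {α : Type*} [DecidableEq α]
    (s t : Finset α) : |(#s : ℝ) - #t| ≤ #(s ∆ t) := by
  have hs := card_inter_add_card_sdiff s t
  have ht := card_inter_add_card_sdiff t s
  rw [inter_comm] at ht
  rw [card_symmDiff, abs_le]
  constructor <;> push_cast [← hs, ← ht] <;> linarith [(#(s \ t)).cast_nonneg (α := ℝ),
    (#(t \ s)).cast_nonneg (α := ℝ)]

theorem List.card_toFinset_take_sdiff_le {α : Type*} [DecidableEq α] (l : List α) (a b : ℕ) :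
    #((l.take a).toFinset \ (l.take b).toFinset) ≤ a - b := by
  have hsub : (l.take a).toFinset \ (l.take b).toFinset ⊆ ((l.take a).drop b).toFinset := by
    intro x hx
    obtain ⟨hxa, hxb⟩ := mem_sdiff.1 hx
    rw [List.mem_toFinset, ← List.take_append_drop b (l.take a), List.take_take] at hxa
    rcases List.mem_append.1 hxa with h | h
    · exact absurd (List.mem_toFinset.2
        ((List.take_prefix_take_left (min_le_left _ _)).subset h)) hxb
    · exact List.mem_toFinset.2 h
  refine (card_le_card hsub).trans ((List.toFinset_card_le _).trans ?_)
  rw [List.length_drop, List.length_take]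
  omega

theorem Nat.cast_sub_add_cast_sub (a b : ℕ) :
    ((a - b : ℕ) : ℝ) + ((b - a : ℕ) : ℝ) = |(a : ℝ) - b| := by
  rcases le_total a b with h | h
  · rw [Nat.sub_eq_zero_of_le h, Nat.cast_sub h, abs_sub_comm, abs_of_nonneg (by simpa)]; simp
  · rw [Nat.sub_eq_zero_of_le h, Nat.cast_sub h, abs_of_nonneg (by simpa)]; simp

theorem abs_natCeil_sub_natCeil_le {a b : ℝ} (ha : 0 ≤ a) (hb : 0 ≤ b) :
    |(⌈a⌉₊ : ℝ) - ⌈b⌉₊| ≤ |a - b| + 1 := by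
  have := Nat.le_ceil a; have := Nat.ceil_lt_add_one ha
  have := Nat.le_ceil b; have := Nat.ceil_lt_add_one hb
  rw [abs_le]; constructor <;> linarith [le_abs_self (a - b), neg_abs_le (a - b)]

theorem Finset.sum_abs_div_sum_sub_div_sum_le {ι : Type*} (s : Finset ι) {f g : ι → ℝ}
    (hg : ∀ i ∈ s, 0 ≤ g i) (hf : 0 < ∑ i ∈ s, f i) :
    ∑ i ∈ s, |f i / ∑ j ∈ s, f j - g i / ∑ j ∈ s, g j| ≤
      2 * (∑ i ∈ s, |f i - g i|) / ∑ i ∈ s, f i := by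
  set F := ∑ j ∈ s, f j
  set G := ∑ j ∈ s, g j
  have hG : 0 ≤ G := sum_nonneg hg
  have hFG : |G - F| ≤ ∑ i ∈ s, |f i - g i| := by
    rw [← sum_sub_distrib]
    exact (abs_sum_le_sum_abs _ _).trans_eq (sum_congr rfl fun i _ => abs_sub_comm _ _)
  -- `f/F - g/G = (f - g)/F + g (G - F)/(F G)`
  have key : ∀ i ∈ s, |f i / F - g i / G| ≤ |f i - g i| / F + g i * (|G - F| / (F * G)) := by
    intro i hi
    rcases hG.eq_or_lt with h0 | hGpos
    · have : g i = 0 := (sum_eq_zero_iff_of_nonneg hg).1 h0.symm i hi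
      simp [this, ← h0, abs_div, abs_of_pos hf]
    calc |f i / F - g i / G| = |(f i - g i) / F + g i * ((G - F) / (F * G))| := by
          congr 1; field_simp; ring
      _ ≤ _ := by
        refine (abs_add_le _ _).trans (le_of_eq ?_)
        rw [abs_div, abs_of_pos hf, abs_mul, abs_of_nonneg (hg i hi), abs_div,
          abs_of_pos (mul_pos hf hGpos)]
  calc _ ≤ ∑ i ∈ s, (|f i - g i| / F + g i * (|G - F| / (F * G))) := sum_le_sum key
    _ = (∑ i ∈ s, |f i - g i|) / F + G * (|G - F| / (F * G)) := by
        rw [sum_add_distrib, ← sum_div, ← sum_mul]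
    _ ≤ (∑ i ∈ s, |f i - g i|) / F + |G - F| / F := by
        rcases hG.eq_or_lt with h0 | hGpos
        · simp [← h0, div_nonneg (abs_nonneg _) hf.le]
        · rw [mul_div_assoc', mul_comm F G, mul_div_mul_left _ _ hGpos.ne']
    _ ≤ _ := by rw [two_mul, add_div]; gcongr

namespace BoundedGeometry

variable {X : Type*} [MetricSpace X]

theorem exists_finset_closedBall (hbg : BoundedGeometry X) {r : ℝ} (hr : 0 < r) :
    ∃ B : X → Finset X, ∀ x y, y ∈ B x ↔ dist y x ≤ r :=
  ⟨fun x => ((hbg r hr).choose_spec x).1.toFinset, fun x y => by simp⟩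

theorem exists_card_le (hbg : BoundedGeometry X) {r : ℝ} (hr : 0 < r) :
    ∃ N : ℕ, ∀ x (s : Finset X), (∀ a ∈ s, dist a x ≤ r) → #s ≤ N := by
  obtain ⟨N, hN⟩ := hbg r hr
  refine ⟨N, fun x s hs => ?_⟩
  rw [← Set.ncard_coe_finset]
  exact (Set.ncard_le_ncard (fun a ha => Metric.mem_closedBall.2 (hs a ha)) (hN x).1).trans
    (hN x).2

end BoundedGeometry

namespace NaivePropertyA

section Reach

variable {X : Type*} [DecidableEq X] {B : X → Finset X}

def reach (B : X → Finset X) (k : ℕ) (x : X) : Finset X :=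
  (·.biUnion B)^[k] {x}

theorem reach_zero (x : X) : reach B 0 x = {x} := rfl

theorem reach_succ (k : ℕ) (x : X) : reach B (k + 1) x = (reach B k x).biUnion B :=
  Function.iterate_succ_apply' _ _ _

theorem mem_reach_self (hB : ∀ x, x ∈ B x) (k : ℕ) (x : X) : x ∈ reach B k x := by
  induction k with
  | zero => exact mem_singleton_self x
  | succ k ih => rw [reach_succ]; exact subset_biUnion_of_forall_mem_self hB _ ih

theorem reach_subset_of_isFixedPt {t : Finset X} (ht : Function.IsFixedPt (·.biUnion B) t)
    {x : X} (hx : x ∈ t) (k : ℕ) : reach B k x ⊆ t := by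
  induction k with
  | zero => simpa [reach_zero] using hx
  | succ k ih => rw [reach_succ, ← ht.eq]; exact biUnion_subset_biUnion_of_subset_left B ih

theorem isFixedPt_reach_of_card_le (hB : ∀ x, x ∈ B x) {Q : ℕ} {x : X}
    (hQ : #(reach B Q x) ≤ Q) : Function.IsFixedPt (·.biUnion B) (reach B Q x) := by
  refine (isFixedPt_iterate_or_add_card_le (subset_biUnion_of_forall_mem_self hB) {x} Q
    |>.resolve_right ?_)
  rw [card_singleton]
  exact fun h => by unfold reach at hQ; omega

theorem reach_eq_of_card_le (hB : ∀ x, x ∈ B x) (hsymm : ∀ x y, y ∈ B x → x ∈ B y) {Q : ℕ}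
    {x y : X} (hQ : #(reach B Q x) ≤ Q) (hy : y ∈ B x) : reach B Q y = reach B Q x := by
  have hfix := isFixedPt_reach_of_card_le hB hQ
  have hyx : y ∈ reach B Q x := by
    rw [← hfix.eq]; exact mem_biUnion.2 ⟨x, mem_reach_self hB Q x, hy⟩
  have hsub := reach_subset_of_isFixedPt hfix hyx Q
  have hfix' := isFixedPt_reach_of_card_le hB ((card_le_card hsub).trans hQ)
  have hxy : x ∈ reach B Q y := by
    rw [← hfix'.eq]; exact mem_biUnion.2 ⟨y, mem_reach_self hB Q y, hsymm x y hy⟩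
  exact hsub.antisymm (reach_subset_of_isFixedPt hfix' hxy Q)

theorem dist_le_of_mem_reach [MetricSpace X] {R : ℝ} (hB : ∀ x y, y ∈ B x → dist x y ≤ R)
    {k : ℕ} {x y : X} (hy : y ∈ reach B k x) :
    dist x y ≤ k * R := by
  induction k generalizing y with
  | zero => simp_all [reach_zero]
  | succ k ih =>
    obtain ⟨z, hz, hyz⟩ := mem_biUnion.1 (reach_succ (B := B) k x ▸ hy)
    calc dist x y ≤ dist x z + dist z y := dist_triangle _ _ _
      _ ≤ k * R + R := add_le_add (ih hz) (hB z y hyz)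
      _ = (k + 1 : ℕ) * R := by push_cast; ring

end Reach

section NaiveFamily

variable {X : Type*} [MetricSpace X] [DecidableEq X]

structure IsNaiveFamilyOn (p : X → Prop) (R ε S : ℝ) (F : X → Finset X) : Prop where
  nonempty : ∀ x, p x → (F x).Nonempty
  card_symmDiff_lt :
    ∀ x y, p x → p y → dist x y ≤ R → (#(F x ∆ F y) : ℝ) < ε * #(F x ∩ F y)
  dist_le : ∀ x, p x → ∀ y ∈ F x, dist x y ≤ S

theorem IsNaiveFamilyOn.ite {p : X → Prop} [DecidablePred p] {R ε S S' : ℝ}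
    {F G : X → Finset X}
    (hF : IsNaiveFamilyOn p R ε S F) (hG : IsNaiveFamilyOn (¬ p ·) R ε S' G)
    (hp : ∀ x y, dist x y ≤ R → (p x ↔ p y)) :
    IsNaiveFamilyOn (fun _ => True) R ε (max S S') (fun x => if p x then F x else G x) where
  nonempty x _ := by
    by_cases hx : p x
    · simpa [hx] using hF.nonempty x hx
    · simpa [hx] using hG.nonempty x hx
  card_symmDiff_lt x y _ _ hxy := by
    by_cases hx : p x
    · simpa [hx, (hp x y hxy).1 hx] using hF.card_symmDiff_lt x y hx ((hp x y hxy).1 hx) hxy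
    · have hy : ¬ p y := fun hy => hx ((hp x y hxy).2 hy)
      simpa [hx, hy] using hG.card_symmDiff_lt x y hx hy hxy
  dist_le x _ y hy := by
    by_cases hx : p x
    · simp only [hx, if_true] at hy; exact (hF.dist_le x hx y hy).trans (le_max_left _ _)
    · simp only [hx, if_false] at hy; exact (hG.dist_le x hx y hy).trans (le_max_right _ _)

variable {B : X → Finset X} {R : ℝ}

theorem reach_eq_of_dist_le (hB : ∀ x y, y ∈ B x ↔ dist y x ≤ R) (hR : 0 ≤ R) {Q : ℕ}
    {x y : X} (hQ : #(reach B Q x) ≤ Q) (hxy : dist x y ≤ R) : reach B Q y = reach B Q x :=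
  reach_eq_of_card_le (fun x => (hB x x).2 (by simpa using hR))
    (fun x y h => (hB y x).2 (dist_comm x y ▸ (hB x y).1 h)) hQ
    ((hB x y).2 (dist_comm x y ▸ hxy))

theorem card_reach_le_iff (hB : ∀ x y, y ∈ B x ↔ dist y x ≤ R) (hR : 0 ≤ R) (Q : ℕ) {x y : X}
    (hxy : dist x y ≤ R) : #(reach B Q x) ≤ Q ↔ #(reach B Q y) ≤ Q :=
  ⟨fun h => reach_eq_of_dist_le hB hR h hxy ▸ h,
    fun h => reach_eq_of_dist_le hB hR h (dist_comm x y ▸ hxy) ▸ h⟩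

theorem isNaiveFamilyOn_reach (hB : ∀ x y, y ∈ B x ↔ dist y x ≤ R) (hR : 0 ≤ R) {ε : ℝ}
    (hε : 0 < ε) (Q : ℕ) :
    IsNaiveFamilyOn (fun x => #(reach B Q x) ≤ Q) R ε (Q * R) (reach B Q) := by
  have hne : ∀ x, (reach B Q x).Nonempty :=
    fun x => ⟨x, mem_reach_self (fun x => (hB x x).2 (by simpa using hR)) Q x⟩
  refine ⟨fun x _ => hne x, fun x y hx _ hxy => ?_, fun x _ y hy =>
    dist_le_of_mem_reach (fun x y h => dist_comm x y ▸ (hB x y).1 h) hy⟩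
  rw [reach_eq_of_dist_le hB hR hx hxy, symmDiff_self, inter_self, bot_eq_empty, card_empty,
    Nat.cast_zero]
  exact mul_pos hε (Nat.cast_pos.2 (hne x).card_pos)

end NaiveFamily

section GreedyChain

variable {X : Type*} [DecidableEq X]

open Classical in
/-- Up to `K` points of `BT y`, avoiding the chains of the points of `BD y` that come earlier in
a fixed well-order of `X`. -/
noncomputable def greedyChain (BT BD : X → Finset X) (K : ℕ) : X → List X :=
  IsWellFounded.wf.fix (r := WellOrderingRel) fun y chain =>
    (BT y \ (BD y).biUnion fun z => if h : WellOrderingRel z y then (chain z h).toFinset else ∅)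
      |>.toList.take K

variable {BT BD : X → Finset X} {K : ℕ}

theorem length_greedyChain_le (y : X) : (greedyChain BT BD K y).length ≤ K := by
  rw [greedyChain, WellFounded.fix_eq]; exact List.length_take_le _ _

theorem greedyChain_spec (y : X) : ∃ used : Finset X, #used ≤ #(BD y) * K ∧
    (∀ z ∈ BD y, WellOrderingRel z y → ∀ a ∈ greedyChain BT BD K z, a ∈ used) ∧
    greedyChain BT BD K y = (BT y \ used).toList.take K := by
  classical
  refine ⟨(BD y).biUnion fun z =>
    if WellOrderingRel z y then (greedyChain BT BD K z).toFinset else ∅, ?_, ?_, ?_⟩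
  · refine card_biUnion_le.trans ((sum_le_card_nsmul _ _ K fun z _ => ?_).trans (by simp))
    split_ifs
    · exact (List.toFinset_card_le _).trans (length_greedyChain_le z)
    · simp
  · exact fun z hz hzy a ha => mem_biUnion.2 ⟨z, hz, by simpa [hzy] using ha⟩
  · rw [greedyChain, WellFounded.fix_eq]
    congr!

theorem greedyChain_nodup (y : X) : (greedyChain BT BD K y).Nodup := by
  obtain ⟨used, -, -, h⟩ := greedyChain_spec (BT := BT) (BD := BD) (K := K) y
  exact h ▸ (List.take_sublist _ _).nodup (nodup_toList _)

theorem mem_of_mem_greedyChain {y a : X} (ha : a ∈ greedyChain BT BD K y) : a ∈ BT y := by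
  obtain ⟨used, -, -, h⟩ := greedyChain_spec (BT := BT) (BD := BD) (K := K) y
  exact (mem_sdiff.1 (mem_toList.1 (List.mem_of_mem_take (h ▸ ha)))).1

theorem length_greedyChain {y : X} (h : #(BD y) * K + K ≤ #(BT y)) :
    (greedyChain BT BD K y).length = K := by
  obtain ⟨used, hused, -, hy⟩ := greedyChain_spec (BT := BT) (BD := BD) (K := K) y
  have := le_card_sdiff used (BT y)
  rw [hy, List.length_take, length_toList]
  omega

theorem notMem_greedyChain_of_lt {y z a : X} (hzy : WellOrderingRel z y) (hz : z ∈ BD y)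
    (ha : a ∈ greedyChain BT BD K y) : a ∉ greedyChain BT BD K z := by
  obtain ⟨used, -, hsub, hy⟩ := greedyChain_spec (BT := BT) (BD := BD) (K := K) y
  exact fun haz => (mem_sdiff.1 (mem_toList.1 (List.mem_of_mem_take (hy ▸ ha)))).2
    (hsub z hz hzy a haz)

theorem disjoint_greedyChain {y z : X} (hne : y ≠ z) (hy : y ∈ BD z) (hz : z ∈ BD y) :
    Disjoint (greedyChain BT BD K y).toFinset (greedyChain BT BD K z).toFinset := by
  rcases trichotomous_of WellOrderingRel y z with h | h | h
  · exact disjoint_right.2 fun a haz hay =>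
      notMem_greedyChain_of_lt h hy (List.mem_toFinset.1 haz) (List.mem_toFinset.1 hay)
  · exact absurd h hne
  · exact disjoint_left.2 fun a hay haz =>
      notMem_greedyChain_of_lt h hz (List.mem_toFinset.1 hay) (List.mem_toFinset.1 haz)

end GreedyChain

theorem exists_chains {X : Type*} [MetricSpace X] [DecidableEq X] (hbg : BoundedGeometry X)
    {r : ℝ} (hr : 0 < r) (K : ℕ) :
    ∃ N : ℕ, ∀ r' : ℝ, 0 < r' → ∃ ch : X → List X, (∀ z, (ch z).Nodup) ∧
      (∀ z, ∀ a ∈ ch z, dist a z ≤ r') ∧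
      (∀ z (s : Finset X), (∀ a ∈ s, dist a z ≤ r') → N * K + K ≤ #s → (ch z).length = K) ∧
      ∀ y z, y ≠ z → dist y z ≤ r → Disjoint (ch y).toFinset (ch z).toFinset := by
  obtain ⟨BD, hBD⟩ := hbg.exists_finset_closedBall hr
  obtain ⟨N, hN⟩ := hbg.exists_card_le hr
  refine ⟨N, fun r' hr' => ?_⟩
  obtain ⟨BT, hBT⟩ := hbg.exists_finset_closedBall hr'
  refine ⟨greedyChain BT BD K, greedyChain_nodup, fun z a ha => (hBT z a).1
    (mem_of_mem_greedyChain ha), fun z s hs hsK => length_greedyChain ?_, fun y z hne hyz =>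
    disjoint_greedyChain hne ((hBD z y).2 hyz) ((hBD y z).2 (dist_comm y z ▸ hyz))⟩
  have := card_le_card fun a ha => (hBT z a).2 (hs a ha)
  have := Nat.mul_le_mul_right K (hN z (BD z) fun a ha => (hBD z a).1 ha)
  omega

section Share

variable {X α : Type*} [DecidableEq X]

def mult (A : Finset (X × α)) (z : X) : ℕ := #{p ∈ A | p.1 = z}

variable {A B : Finset (X × α)} {U : Finset X} {z : X}

theorem mult_le_card : mult A z ≤ #A := card_filter_le _ _

theorem mult_eq_zero (hz : z ∉ A.image Prod.fst) : mult A z = 0 :=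
  card_eq_zero.2 (filter_eq_empty_iff.2 fun p hp hpz => hz (mem_image.2 ⟨p, hp, hpz⟩))

theorem mult_pos (hz : z ∈ A.image Prod.fst) : 0 < mult A z := by
  obtain ⟨p, hp, rfl⟩ := mem_image.1 hz
  exact card_pos.2 ⟨p, mem_filter.2 ⟨hp, rfl⟩⟩

theorem sum_mult (hA : A.image Prod.fst ⊆ U) : ∑ z ∈ U, mult A z = #A :=
  (card_eq_sum_card_fiberwise fun _ hp => hA (mem_image_of_mem _ hp)).symm

theorem sum_abs_mult_sub_le [DecidableEq α] (U : Finset X) (A B : Finset (X × α)) :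
    ∑ z ∈ U, |(mult A z : ℝ) - mult B z| ≤ #(A ∆ B) := by
  calc ∑ z ∈ U, |(mult A z : ℝ) - mult B z| ≤ ∑ z ∈ U, (mult (A ∆ B) z : ℝ) := by
        refine sum_le_sum fun z _ => (abs_card_sub_card_le_card_symmDiff _ _).trans ?_
        exact Nat.cast_le.2 (card_le_card fun p => by simp [mem_symmDiff]; tauto)
    _ ≤ #(A ∆ B) := by
        rw [← Nat.cast_sum, Nat.cast_le]
        simp only [mult]
        rw [sum_card_fiberwise_eq_card_filter]
        exact card_filter_le _ _

theorem card_inter_le_sum_min_mult [DecidableEq α] (hA : A.image Prod.fst ⊆ U) :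
    #(A ∩ B) ≤ ∑ z ∈ U, min (mult A z) (mult B z) := by
  rw [← sum_mult ((image_subset_image inter_subset_left).trans hA)]
  exact sum_le_sum fun z _ => le_min (card_le_card (filter_subset_filter _ inter_subset_left))
    (card_le_card (filter_subset_filter _ inter_subset_right))

/-- The fibre sizes of `A` rescaled to total mass about `K`. -/
noncomputable def share (K : ℕ) (A : Finset (X × α)) (z : X) : ℕ :=
  ⌈K * (mult A z : ℝ) / #A⌉₊

variable {K : ℕ}

theorem share_le : share K A z ≤ K := by
  refine Nat.ceil_le.2 (div_le_of_le_mul₀ (Nat.cast_nonneg _) (Nat.cast_nonneg _) ?_)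
  exact mul_le_mul_of_nonneg_left (Nat.cast_le.2 mult_le_card) (Nat.cast_nonneg _)

theorem share_eq_zero (hz : z ∉ A.image Prod.fst) : share K A z = 0 := by
  simp [share, mult_eq_zero hz]

theorem share_pos (hK : 0 < K) (hz : z ∈ A.image Prod.fst) : 0 < share K A z := by
  have hA : 0 < #A := card_pos.2 (image_nonempty.1 ⟨z, hz⟩)
  have := mult_pos hz
  exact Nat.ceil_pos.2 (by positivity)

theorem sum_abs_share_sub_le [DecidableEq α] (hA : A.image Prod.fst ⊆ U) (hB : B.image Prod.fst ⊆ U)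
    (hAne : A.Nonempty) :
    ∑ z ∈ U, |(share K A z : ℝ) - share K B z| ≤ #U + 2 * K * #(A ∆ B) / #A := by
  have hTA : (#A : ℝ) = ∑ z ∈ U, (mult A z : ℝ) := by rw [← Nat.cast_sum, sum_mult hA]
  have hTB : (#B : ℝ) = ∑ z ∈ U, (mult B z : ℝ) := by rw [← Nat.cast_sum, sum_mult hB]
  have hpos : (0 : ℝ) < ∑ z ∈ U, (mult A z : ℝ) := hTA ▸ Nat.cast_pos.2 hAne.card_pos
  calc ∑ z ∈ U, |(share K A z : ℝ) - share K B z|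
      ≤ ∑ z ∈ U, (K * |(mult A z : ℝ) / #A - mult B z / #B| + 1) := by
        refine sum_le_sum fun z _ => (abs_natCeil_sub_natCeil_le (by positivity)
          (by positivity)).trans_eq ?_
        rw [mul_div_assoc, mul_div_assoc, ← mul_sub, abs_mul, Nat.abs_cast]
    _ = K * ∑ z ∈ U, |(mult A z : ℝ) / #A - mult B z / #B| + #U := by
        rw [sum_add_distrib, ← mul_sum, sum_const, nsmul_one]
    _ ≤ K * (2 * (∑ z ∈ U, |(mult A z : ℝ) - mult B z|) / #A) + #U := by
        rw [hTA, hTB]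
        gcongr
        exact sum_abs_div_sum_sub_div_sum_le U (fun _ _ => Nat.cast_nonneg _) hpos
    _ ≤ K * (2 * #(A ∆ B) / #A) + #U := by gcongr; exact sum_abs_mult_sub_le U A B
    _ = #U + 2 * K * #(A ∆ B) / #A := by ring

theorem mul_card_inter_div_le_sum_min_share [DecidableEq α] (hA : A.image Prod.fst ⊆ U)
    (hAne : A.Nonempty) (hBne : B.Nonempty) :
    K * #(A ∩ B) / max (#A : ℝ) #B ≤ ∑ z ∈ U, min (share K A z : ℝ) (share K B z) := by
  have hTA : (0 : ℝ) < #A := Nat.cast_pos.2 hAne.card_pos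
  have hTB : (0 : ℝ) < #B := Nat.cast_pos.2 hBne.card_pos
  have hmin : ∀ z, K * min (mult A z : ℝ) (mult B z) / max (#A : ℝ) #B ≤
      min (share K A z : ℝ) (share K B z) := fun z => le_min
    ((div_le_div₀ (by positivity) (by gcongr; exact min_le_left _ _) hTA (le_max_left _ _)).trans
      (Nat.le_ceil _))
    ((div_le_div₀ (by positivity) (by gcongr; exact min_le_right _ _) hTB
      (le_max_right _ _)).trans (Nat.le_ceil _))
  calc K * (#(A ∩ B) : ℝ) / max (#A : ℝ) #B
      ≤ K * (∑ z ∈ U, min (mult A z : ℝ) (mult B z)) / max (#A : ℝ) #B := by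
        gcongr; exact_mod_cast card_inter_le_sum_min_mult hA
    _ = ∑ z ∈ U, K * min (mult A z : ℝ) (mult B z) / max (#A : ℝ) #B := by
        rw [mul_sum, sum_div]
    _ ≤ _ := sum_le_sum fun z _ => hmin z

end Share

section Spread

variable {X : Type*} [DecidableEq X]

def spread (ch : X → List X) (s : Finset X) (n : X → ℕ) : Finset X :=
  s.biUnion fun z => ((ch z).take (n z)).toFinset

variable {ch : X → List X} {s U : Finset X} {n n' : X → ℕ}

theorem mem_spread {a : X} : a ∈ spread ch s n ↔ ∃ z ∈ s, a ∈ (ch z).take (n z) := by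
  simp [spread]

theorem spread_nonempty {z : X} (hz : z ∈ s) (hn : 0 < n z) (hch : 0 < (ch z).length) :
    (spread ch s n).Nonempty := by
  obtain ⟨a, ha⟩ := List.exists_mem_of_length_pos (l := (ch z).take (n z))
    (by rw [List.length_take]; omega)
  exact ⟨a, mem_spread.2 ⟨z, hz, ha⟩⟩

theorem spread_eq_of_subset (hs : s ⊆ U) (hn : ∀ z ∈ U, z ∉ s → n z = 0) :
    spread ch s n = spread ch U n := by
  ext a
  simp only [mem_spread]
  refine ⟨fun ⟨z, hz, ha⟩ => ⟨z, hs hz, ha⟩, fun ⟨z, hz, ha⟩ => ⟨z, ?_, ha⟩⟩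
  by_contra hzs
  simp [hn z hz hzs] at ha

theorem card_sdiff_spread_le : #(spread ch U n \ spread ch U n') ≤ ∑ z ∈ U, (n z - n' z) := by
  refine (card_le_card fun a ha => ?_).trans (card_biUnion_le.trans (sum_le_sum fun z _ =>
    List.card_toFinset_take_sdiff_le (ch z) (n z) (n' z)))
  obtain ⟨ha, ha'⟩ := mem_sdiff.1 ha
  obtain ⟨z, hz, haz⟩ := mem_spread.1 ha
  exact mem_biUnion.2 ⟨z, hz, mem_sdiff.2 ⟨List.mem_toFinset.2 haz,
    fun h => ha' (mem_spread.2 ⟨z, hz, List.mem_toFinset.1 h⟩)⟩⟩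

theorem card_symmDiff_spread_le :
    (#(spread ch U n ∆ spread ch U n') : ℝ) ≤ ∑ z ∈ U, |(n z : ℝ) - n' z| := by
  simp only [← Nat.cast_sub_add_cast_sub, sum_add_distrib, card_symmDiff, Nat.cast_add]
  exact add_le_add (by exact_mod_cast card_sdiff_spread_le)
    (by exact_mod_cast card_sdiff_spread_le)

theorem sum_min_le_card_inter_spread (hnodup : ∀ z ∈ U, (ch z).Nodup)
    (hlen : ∀ z ∈ U, n z ≤ (ch z).length)
    (hdisj : (U : Set X).PairwiseDisjoint fun z => (ch z).toFinset) :
    ∑ z ∈ U, min (n z) (n' z) ≤ #(spread ch U n ∩ spread ch U n') := by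
  have hsub : spread ch U (fun z => min (n z) (n' z)) ⊆ spread ch U n ∩ spread ch U n' := by
    intro a ha
    obtain ⟨z, hz, haz⟩ := mem_spread.1 ha
    exact mem_inter.2
      ⟨mem_spread.2 ⟨z, hz, (List.take_prefix_take_left (min_le_left _ _)).subset haz⟩,
      mem_spread.2 ⟨z, hz, (List.take_prefix_take_left (min_le_right _ _)).subset haz⟩⟩
  refine le_of_eq_of_le ?_ (card_le_card hsub)
  rw [spread, card_biUnion (hdisj.mono fun z a ha =>
    List.mem_toFinset.2 (List.take_subset _ _ (List.mem_toFinset.1 ha)))]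
  refine sum_congr rfl fun z hz => ?_
  rw [List.toFinset_card_of_nodup ((List.take_sublist _ _).nodup (hnodup z hz)),
    List.length_take]
  have := hlen z hz
  omega

end Spread

section NaiveSet

variable {X α : Type*} [DecidableEq X]

/-- The set `Ã_x` built from `A_x`. -/
noncomputable def naiveSet (ch : X → List X) (K : ℕ) (A : Finset (X × α)) : Finset X :=
  spread ch (A.image Prod.fst) (share K A)

variable {ch : X → List X} {K : ℕ}

theorem naiveSet_eq_spread {A : Finset (X × α)} {U : Finset X} (hA : A.image Prod.fst ⊆ U) :
    naiveSet ch K A = spread ch U (share K A) :=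
  spread_eq_of_subset hA fun _ _ hz => share_eq_zero hz

theorem card_symmDiff_naiveSet_lt [DecidableEq α] {U : Finset X} {A B : Finset (X × α)} {N : ℕ}
    {δ ε : ℝ}
    (hA : A.image Prod.fst ⊆ U) (hB : B.image Prod.fst ⊆ U) (hUN : #U ≤ N)
    (hnodup : ∀ z ∈ U, (ch z).Nodup) (hlen : ∀ z ∈ U, (ch z).length = K)
    (hdisj : (U : Set X).PairwiseDisjoint fun z => (ch z).toFinset)
    (hAB : (#(A ∆ B) : ℝ) < δ * #(A ∩ B)) (hδε : δ ≤ ε / 8) (hδ : δ ≤ 1) (hK : 0 < K)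
    (hKN : 4 * N ≤ ε * K) :
    (#(naiveSet ch K A ∆ naiveSet ch K B) : ℝ) < ε * #(naiveSet ch K A ∩ naiveSet ch K B) := by
  set D : ℝ := ((#(A ∆ B) : ℕ) : ℝ)
  set I : ℝ := ((#(A ∩ B) : ℕ) : ℝ)
  have hD : 0 ≤ D := Nat.cast_nonneg _
  have hδI : 0 < δ * I := hD.trans_lt hAB
  have hδpos : 0 < δ := pos_of_mul_pos_left hδI (Nat.cast_nonneg _)
  have hIpos : 0 < I := pos_of_mul_pos_right hδI hδpos.le
  have hABne : (A ∩ B).Nonempty := card_pos.1 (Nat.cast_pos.1 hIpos)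
  have hAne : A.Nonempty := hABne.mono inter_subset_left
  have hBne : B.Nonempty := hABne.mono inter_subset_right
  have hIA : I ≤ #A := Nat.cast_le.2 (card_le_card inter_subset_left)
  have hMI : max (#A : ℝ) #B ≤ I + D := by
    have hA' := card_inter_add_card_sdiff A B
    have hB' := card_inter_add_card_sdiff B A
    rw [inter_comm] at hB'
    have := card_symmDiff A B
    refine max_le ?_ ?_ <;> simp only [I, D] <;> norm_cast <;> omega
  rw [naiveSet_eq_spread hA, naiveSet_eq_spread hB]
  have hΔ : (#(spread ch U (share K A) ∆ spread ch U (share K B)) : ℝ) < ε * K / 2 :=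
    calc _ ≤ ∑ z ∈ U, |(share K A z : ℝ) - share K B z| := card_symmDiff_spread_le
      _ ≤ #U + 2 * K * D / #A := sum_abs_share_sub_le hA hB hAne
      _ < N + 2 * K * δ := by
        refine add_lt_add_of_le_of_lt (by exact_mod_cast hUN) ?_
        rw [div_lt_iff₀ (hIpos.trans_le hIA)]
        calc 2 * K * D < 2 * K * (δ * #A) :=
              mul_lt_mul_of_pos_left (hAB.trans_le (by gcongr)) (by positivity)
          _ = 2 * K * δ * #A := by ring
      _ ≤ ε * K / 2 := by nlinarith
  have hι : (K : ℝ) ≤ 2 * #(spread ch U (share K A) ∩ spread ch U (share K B)) := by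
    have hmin : ∑ z ∈ U, min (share K A z : ℝ) (share K B z) ≤
        #(spread ch U (share K A) ∩ spread ch U (share K B)) := by
      have := sum_min_le_card_inter_spread (n := share K A) (n' := share K B) hnodup
        (fun z hz => (hlen z hz).symm ▸ share_le) hdisj
      exact_mod_cast this
    have h := (mul_card_inter_div_le_sum_min_share (K := K) hA hAne hBne).trans hmin
    rw [div_le_iff₀ (by positivity)] at h
    have hDI : D ≤ I := hAB.le.trans (mul_le_of_le_one_left hIpos.le hδ)
    refine le_of_mul_le_mul_right (h.trans ?_) hIpos
    nlinarith [(#(spread ch U (share K A) ∩ spread ch U (share K B))).cast_nonneg (α := ℝ)]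
  nlinarith

end NaiveSet

theorem exists_isNaiveFamilyOn_naiveSet {X : Type*} [MetricSpace X]
    [DecidableEq X] (hbg : BoundedGeometry X) (hA : HasPropertyA X) {R ε : ℝ} (hR : 0 < R)
    (hε : 0 < ε) {B : X → Finset X} (hB : ∀ x y, y ∈ B x ↔ dist y x ≤ R) :
    ∃ (Q : ℕ) (S : ℝ) (G : X → Finset X), 0 < S ∧
      IsNaiveFamilyOn (fun x => ¬ #(reach B Q x) ≤ Q) R ε S G := by
  obtain ⟨A, S₀, hS₀, hne, hAR, hAS⟩ := hA R hR (min (ε / 8) 1) (by positivity)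
  have hAS' : ∀ x, ∀ z ∈ (A x).image Prod.fst, dist x z ≤ S₀ :=
    fun x => forall_mem_image.2 (hAS x)
  obtain ⟨N, hN⟩ := hbg.exists_card_le (r := S₀ + R) (by positivity)
  set K := ⌈4 * N / ε⌉₊ + 1
  have hK : 0 < K := Nat.succ_pos _
  have hKN : 4 * N ≤ ε * K := by
    rw [← div_le_iff₀' hε]; exact (Nat.le_ceil _).trans (by simp [K])
  obtain ⟨M, hM⟩ := exists_chains hbg (r := 2 * (S₀ + R)) (by positivity) K
  set Q := M * K + K
  obtain ⟨ch, hnodup, hdist, hlen, hdisj⟩ := hM (Q * R + S₀) (by positivity)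
  -- The more than `Q` points of `reach B Q x` all lie within `Q * R + S₀` of `z`.
  have hlong : ∀ x, ¬ #(reach B Q x) ≤ Q → ∀ z, dist x z ≤ S₀ → (ch z).length = K := by
    refine fun x hx z hz => hlen z (reach B Q x) (fun a ha => ?_) (by omega)
    calc dist a z ≤ dist x a + dist x z := dist_triangle_left _ _ _
      _ ≤ Q * R + S₀ := add_le_add (dist_le_of_mem_reach
          (fun x y h => dist_comm x y ▸ (hB x y).1 h) ha) hz
  refine ⟨Q, S₀ + (Q * R + S₀), fun x => naiveSet ch K (A x), by positivity,
    ⟨fun x hx => ?_, fun x y hx hy hxy => ?_, fun x _ a ha => ?_⟩⟩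
  · obtain ⟨p, hp⟩ := hne x
    have hz := mem_image_of_mem Prod.fst hp
    exact spread_nonempty hz (share_pos hK hz) (by rw [hlong x hx _ (hAS' x _ hz)]; omega)
  · have hU : ∀ z ∈ (A x).image Prod.fst ∪ (A y).image Prod.fst, dist z x ≤ S₀ + R := by
      intro z hz
      rcases mem_union.1 hz with hz | hz
      · linarith [dist_comm z x, hAS' x z hz]
      · linarith [dist_triangle z y x, dist_comm z y, dist_comm y x, hAS' y z hz]
    refine card_symmDiff_naiveSet_lt subset_union_left subset_union_right (hN x _ hU)
      (fun z _ => hnodup z) (fun z hz => ?_) (fun z hz z' hz' hne => hdisj z z' hne ?_)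
      (hAR x y hxy) (min_le_left _ _) (min_le_right _ _) hK hKN
    · rcases mem_union.1 hz with hz | hz
      · exact hlong x hx z (hAS' x z hz)
      · exact hlong y hy z (hAS' y z hz)
    · linarith [dist_triangle_right z z' x, hU z hz, hU z' hz']
  · obtain ⟨z, hz, haz⟩ := mem_spread.1 ha
    linarith [dist_triangle x z a, hAS' x z hz, hdist z a (List.mem_of_mem_take haz),
      dist_comm a z]

end NaivePropertyA

open NaivePropertyA

theorem propertyA_implies_naivePropertyA_general (X : Type*) [MetricSpace X] [DecidableEq X]
    (hbg : BoundedGeometry X) (hA : HasPropertyA X) :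
    ∀ R : ℝ, 0 < R → ∀ ε : ℝ, 0 < ε →
      ∃ (A : X → Finset X) (S : ℝ), 0 < S ∧
        (∀ x : X, (A x).Nonempty) ∧
        (∀ x y : X, dist x y ≤ R →
          ((symmDiff (A x) (A y)).card : ℝ) < ε * ((A x ∩ A y).card : ℝ)) ∧
        (∀ x : X, ∀ y ∈ A x, dist x y ≤ S) := by
  intro R hR ε hε
  obtain ⟨B, hB⟩ := hbg.exists_finset_closedBall hR
  obtain ⟨Q, S, G, hS, hG⟩ := exists_isNaiveFamilyOn_naiveSet hbg hA hR hε hB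
  have hF := (isNaiveFamilyOn_reach hB hR.le hε Q).ite hG
    fun x y hxy => card_reach_le_iff hB hR.le Q hxy
  exact ⟨_, _, lt_max_of_lt_right hS, fun x => hF.nonempty x trivial,
    fun x y => hF.card_symmDiff_lt x y trivial trivial, fun x => hF.dist_le x trivial⟩

/-- If a discrete metric space of bounded geometry has Yu's property A, then it has naive
property A: for all `R, ε > 0` there are a family `{Ã_x}` of finite non-empty subsets of `X`
itself and an `S > 0` such that `|Ã_x ∆ Ã_y| / |Ã_x ∩ Ã_y| < ε` whenever `dist x y ≤ R`,
and `Ã_x ⊆ B(x,S)` for all `x`. -/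
theorem propertyA_implies_naivePropertyA (X : Type*) [MetricSpace X] [DecidableEq X]
    (hdisc : UniformlyDiscrete X) (hbg : BoundedGeometry X) (hA : HasPropertyA X) :
    ∀ R : ℝ, 0 < R → ∀ ε : ℝ, 0 < ε →
      ∃ (A : X → Finset X) (S : ℝ), 0 < S ∧
        (∀ x : X, (A x).Nonempty) ∧
        (∀ x y : X, dist x y ≤ R →
          ((symmDiff (A x) (A y)).card : ℝ) < ε * ((A x ∩ A y).card : ℝ)) ∧
        (∀ x : X, ∀ y ∈ A x, dist x y ≤ S) :=
  propertyA_implies_naivePropertyA_general X hbg hA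
end

section
/- Let (X,d_X) and (Y,d_Y) be discrete metric spaces of bounded geometry, each with naive property A. Then the Cartesian product X × Y, equipped with the metric d((x,y),(x',y')) = max{d_X(x,x'), d_Y(y,y')}, has naive property A. -/
/-- Naive property A. -/
def HasNaivePropertyA (X : Type*) [MetricSpace X] [DecidableEq X] : Prop :=
  ∀ R : ℝ, 0 < R → ∀ ε : ℝ, 0 < ε →
    ∃ (A : X → Finset X) (S : ℝ), 0 < S ∧
      (∀ x : X, (A x).Nonempty) ∧
      (∀ x y : X, dist x y ≤ R →
        ((symmDiff (A x) (A y)).card : ℝ) < ε * ((A x ∩ A y).card : ℝ)) ∧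
      (∀ x : X, ∀ y ∈ A x, dist x y ≤ S)

lemma my_card_union_eq_inter_add_symmDiff {α : Type*} [DecidableEq α] (s t : Finset α) :
    (s ∪ t).card = (s ∩ t).card + (symmDiff s t).card := by
  rw [symmDiff_eq_sup_sdiff_inf]
  simp only [Finset.sup_eq_union, Finset.inf_eq_inter]
  rw [Finset.card_sdiff_of_subset Finset.inter_subset_union]
  have := Finset.card_le_card (Finset.inter_subset_union (s := s) (t := t))
  omega

lemma my_prod_inter {α β : Type*} [DecidableEq α] [DecidableEq β]
    (s s' : Finset α) (t t' : Finset β) :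
    (s ×ˢ t) ∩ (s' ×ˢ t') = (s ∩ s') ×ˢ (t ∩ t') := by
  ext ⟨a, b⟩
  simp only [Finset.mem_inter, Finset.mem_product]
  tauto

/-- Naive property A is preserved under finite Cartesian products.  Here `X × Y` carries
the Mathlib product metric, which is exactly the max-metric
`dist (x,y) (x',y') = max (dist x x') (dist y y')`. -/
theorem naivePropertyA_prod (X Y : Type*) [MetricSpace X] [MetricSpace Y]
    [DecidableEq X] [DecidableEq Y]
    (hdX : UniformlyDiscrete X) (hbX : BoundedGeometry X)
    (hdY : UniformlyDiscrete Y) (hbY : BoundedGeometry Y)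
    (hmax : ∀ p q : X × Y, dist p q = max (dist p.1 q.1) (dist p.2 q.2))
    (hX : HasNaivePropertyA X) (hY : HasNaivePropertyA Y) :
    HasNaivePropertyA (X × Y) := by
  intro R hR ε hε
  set ε' : ℝ := min (ε / 3) 1 with hε'def
  have hε'pos : 0 < ε' := lt_min (by linarith) one_pos
  have hε'one : ε' ≤ 1 := min_le_right _ _
  have hε'three : ε' ≤ ε / 3 := min_le_left _ _
  obtain ⟨A, S1, hS1, hAne, hAsd, hAS⟩ := hX R hR ε' hε'pos
  obtain ⟨B, S2, hS2, hBne, hBsd, hBS⟩ := hY R hR ε' hε'pos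
  refine ⟨fun p => A p.1 ×ˢ B p.2, max S1 S2, lt_max_of_lt_left hS1, ?_, ?_, ?_⟩
  · intro p
    exact (hAne p.1).product (hBne p.2)
  · intro p q hpq
    have h1 : dist p.1 q.1 ≤ R := by
      rw [hmax] at hpq; exact le_trans (le_max_left _ _) hpq
    have h2 : dist p.2 q.2 ≤ R := by
      rw [hmax] at hpq; exact le_trans (le_max_right _ _) hpq
    have hA := hAsd p.1 q.1 h1
    have hB := hBsd p.2 q.2 h2
    set s := A p.1
    set s' := A q.1
    set t := B p.2
    set t' := B q.2
    -- intersections are nonempty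
    have hm : (1 : ℝ) ≤ ((s ∩ s').card : ℝ) := by
      have : 0 < (s ∩ s').card := by
        by_contra h
        push_neg at h
        have h0 : (s ∩ s').card = 0 := by omega
        rw [h0] at hA
        simp only [Nat.cast_zero, mul_zero] at hA
        exact (Nat.cast_nonneg _).not_gt hA
      exact_mod_cast this
    have hn : (1 : ℝ) ≤ ((t ∩ t').card : ℝ) := by
      have : 0 < (t ∩ t').card := by
        by_contra h
        push_neg at h
        have h0 : (t ∩ t').card = 0 := by omega
        rw [h0] at hB
        simp only [Nat.cast_zero, mul_zero] at hB
        exact (Nat.cast_nonneg _).not_gt hB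
      exact_mod_cast this
    -- union cards
    have hu1 : ((s ∪ s').card : ℝ) = ((s ∩ s').card : ℝ) + ((symmDiff s s').card : ℝ) := by
      exact_mod_cast congrArg (Nat.cast : ℕ → ℝ) (my_card_union_eq_inter_add_symmDiff s s')
    have hu2 : ((t ∪ t').card : ℝ) = ((t ∩ t').card : ℝ) + ((symmDiff t t').card : ℝ) := by
      exact_mod_cast congrArg (Nat.cast : ℕ → ℝ) (my_card_union_eq_inter_add_symmDiff t t')
    have hkey : (symmDiff (s ×ˢ t) (s' ×ˢ t')).card + (s ∩ s').card * (t ∩ t').card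
        = ((s ×ˢ t) ∪ (s' ×ˢ t')).card := by
      have h := my_card_union_eq_inter_add_symmDiff (s ×ˢ t) (s' ×ˢ t')
      rw [my_prod_inter, Finset.card_product] at h
      omega
    have hsub : ((s ×ˢ t) ∪ (s' ×ˢ t')).card ≤ (s ∪ s').card * (t ∪ t').card := by
      calc ((s ×ˢ t) ∪ (s' ×ˢ t')).card
          ≤ ((s ∪ s') ×ˢ (t ∪ t')).card := by
            apply Finset.card_le_card
            apply Finset.union_subset
            · exact Finset.product_subset_product Finset.subset_union_left
                Finset.subset_union_left
            · exact Finset.product_subset_product Finset.subset_union_right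
                Finset.subset_union_right
        _ = (s ∪ s').card * (t ∪ t').card := Finset.card_product _ _
    -- pass to ℝ
    have hkeyR : ((symmDiff (s ×ˢ t) (s' ×ˢ t')).card : ℝ)
        + ((s ∩ s').card : ℝ) * ((t ∩ t').card : ℝ)
        = (((s ×ˢ t) ∪ (s' ×ˢ t')).card : ℝ) := by exact_mod_cast hkey
    have hsubR : ((((s ×ˢ t) ∪ (s' ×ˢ t')).card : ℕ) : ℝ)
        ≤ ((s ∪ s').card : ℝ) * ((t ∪ t').card : ℝ) := by exact_mod_cast hsub
    rw [my_prod_inter, Finset.card_product]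
    push_cast
    have hsX : (0 : ℝ) ≤ ((symmDiff s s').card : ℝ) := Nat.cast_nonneg _
    have hsY : (0 : ℝ) ≤ ((symmDiff t t').card : ℝ) := Nat.cast_nonneg _
    nlinarith [mul_le_mul hA.le hB.le hsY (by nlinarith : (0:ℝ) ≤ ε' * ((s ∩ s').card : ℝ)),
      mul_lt_mul_of_pos_left hB (by linarith : (0:ℝ) < ((s ∩ s').card : ℝ)),
      mul_lt_mul_of_pos_left hA (by linarith : (0:ℝ) < ((t ∩ t').card : ℝ)),
      mul_le_mul hε'three hε'one hε'pos.le (by linarith : (0:ℝ) ≤ ε / 3),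
      mul_pos (lt_of_lt_of_le one_pos hm) (lt_of_lt_of_le one_pos hn)]
  · rintro ⟨x, y⟩ ⟨a, b⟩ hmem
    rw [Finset.mem_product] at hmem
    rw [hmax]
    exact max_le_max (hAS x a hmem.1) (hBS y b hmem.2)
end

section
/- Let (X,d_X) and (Y,d_Y) be discrete metric spaces of bounded geometry, and let f: X → Y be a coarse equivalence. If X has naive property A, then Y has naive property A. -/
/-- `f : X → Y` is a coarse equivalence: there are nondecreasing control functions
`ρ₋, ρ₊` with `ρ₋ → ∞` squeezing `dist (f x) (f x')` in terms of `dist x x'`, and the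
image of `f` is coarsely dense in `Y`. -/
def IsCoarseEquivalence {X Y : Type*} [MetricSpace X] [MetricSpace Y] (f : X → Y) : Prop :=
  ∃ ρminus ρplus : ℝ → ℝ,
    Monotone ρminus ∧ Monotone ρplus ∧
    Filter.Tendsto ρminus Filter.atTop Filter.atTop ∧
    (∀ x x' : X,
      ρminus (dist x x') ≤ dist (f x) (f x') ∧ dist (f x) (f x') ≤ ρplus (dist x x')) ∧
    ∃ C : ℝ, 0 < C ∧ ∀ y : Y, ∃ x : X, dist y (f x) ≤ C

/-- Naive property A is invariant under coarse equivalence of discrete bounded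
geometry metric spaces. -/
theorem naivePropertyA_coarse_invariant (X Y : Type*) [MetricSpace X] [MetricSpace Y]
    [DecidableEq X] [DecidableEq Y]
    (hdX : UniformlyDiscrete X) (hbX : BoundedGeometry X)
    (hdY : UniformlyDiscrete Y) (hbY : BoundedGeometry Y)
    (f : X → Y) (hf : IsCoarseEquivalence f)
    (hX : HasNaivePropertyA X) :
    HasNaivePropertyA Y := by
  obtain ⟨ρm, ρp, hmm, hmp, hlim, hbound, C, hC, hdense⟩ := hf
  choose g hg using hdense
  obtain ⟨t₀, ht₀⟩ := Filter.eventually_atTop.mp (hlim.eventually (Filter.eventually_gt_atTop 0))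
  have ht₁ : (0:ℝ) < max t₀ 1 := lt_max_of_lt_right one_pos
  have hkey : ∀ x x' : X, f x = f x' → dist x x' ≤ max t₀ 1 := by
    intro x x' hfx
    by_contra h
    push_neg at h
    have h1 : 0 < ρm (dist x x') := ht₀ _ (le_trans (le_max_left _ _) h.le)
    have h2 := (hbound x x').1
    rw [hfx, dist_self] at h2
    linarith
  obtain ⟨N, hN⟩ := hbX (max t₀ 1) ht₁
  have hfiber : ∀ (s : Finset X) (v : Y), (s.filter (fun x => f x = v)).card ≤ N + 1 := by
    intro s v
    rcases (s.filter (fun x => f x = v)).eq_empty_or_nonempty with h | ⟨x₀, hx₀⟩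
    · simp [h]
    · have hx₀' := Finset.mem_filter.mp hx₀
      have hsub : ↑(s.filter (fun x => f x = v)) ⊆ Metric.closedBall x₀ (max t₀ 1) := by
        intro x hx
        have hx' := Finset.mem_filter.mp hx
        exact Metric.mem_closedBall.mpr (hkey x x₀ (hx'.2.trans hx₀'.2.symm))
      calc (s.filter (fun x => f x = v)).card
          = (↑(s.filter (fun x => f x = v)) : Set X).ncard := (Set.ncard_coe_finset _).symm
        _ ≤ (Metric.closedBall x₀ (max t₀ 1)).ncard := Set.ncard_le_ncard hsub (hN x₀).1
        _ ≤ N := (hN x₀).2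
        _ ≤ N + 1 := Nat.le_succ N
  intro R hR ε hε
  obtain ⟨T, hT⟩ := Filter.eventually_atTop.mp
    (hlim.eventually (Filter.eventually_gt_atTop (R + 2*C)))
  have hgdist : ∀ y y' : Y, dist y y' ≤ R → dist (g y) (g y') ≤ max T 1 := by
    intro y y' hyy
    by_contra h
    push_neg at h
    have h1 : R + 2*C < ρm (dist (g y) (g y')) := hT _ (le_trans (le_max_left _ _) h.le)
    have h2 := (hbound (g y) (g y')).1
    have hy1 : dist (f (g y)) y ≤ C := by rw [dist_comm]; exact hg y
    have hy2 : dist y' (f (g y')) ≤ C := hg y'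
    have h3 : dist (f (g y)) (f (g y')) ≤ C + R + C := by
      calc dist (f (g y)) (f (g y'))
          ≤ dist (f (g y)) y + dist y y' + dist y' (f (g y')) := dist_triangle4 _ _ _ _
        _ ≤ C + R + C := by linarith
    linarith
  have hk0 : (0:ℝ) < (N + 1 : ℕ) := by positivity
  have hεk : 0 < ε / (N + 1 : ℕ) := div_pos hε hk0
  obtain ⟨A, S, hS, hne, hsym, hsupp⟩ := hX (max T 1) (lt_max_of_lt_right one_pos)
    (ε / (N + 1 : ℕ)) hεk
  refine ⟨fun y => (A (g y)).image f, max (C + ρp S) 1, lt_max_of_lt_right one_pos, ?_, ?_, ?_⟩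
  · intro y; exact (hne (g y)).image f
  · intro y y' hyy
    have h1 := hsym (g y) (g y') (hgdist y y' hyy)
    have h2 : symmDiff ((A (g y)).image f) ((A (g y')).image f)
        ⊆ (symmDiff (A (g y)) (A (g y'))).image f := by
      intro z hz
      rw [Finset.mem_symmDiff] at hz
      rcases hz with ⟨hz1, hz2⟩ | ⟨hz1, hz2⟩
      · obtain ⟨a, ha, rfl⟩ := Finset.mem_image.mp hz1
        exact Finset.mem_image.mpr ⟨a, Finset.mem_symmDiff.mpr
          (Or.inl ⟨ha, fun h => hz2 (Finset.mem_image_of_mem f h)⟩), rfl⟩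
      · obtain ⟨a, ha, rfl⟩ := Finset.mem_image.mp hz1
        exact Finset.mem_image.mpr ⟨a, Finset.mem_symmDiff.mpr
          (Or.inr ⟨ha, fun h => hz2 (Finset.mem_image_of_mem f h)⟩), rfl⟩
    have h4 : ((A (g y)) ∩ (A (g y'))).card
        ≤ (N + 1) * (((A (g y)) ∩ (A (g y'))).image f).card :=
      Finset.card_le_mul_card_image _ (N + 1) (fun a _ => hfiber _ a)
    have h5 : (((A (g y)) ∩ (A (g y'))).image f).card
        ≤ (((A (g y)).image f) ∩ ((A (g y')).image f)).card :=
      Finset.card_le_card (Finset.image_inter_subset _ _ _)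
    have h6 : (symmDiff ((A (g y)).image f) ((A (g y')).image f)).card
        ≤ (symmDiff (A (g y)) (A (g y'))).card :=
      le_trans (Finset.card_le_card h2) Finset.card_image_le
    have h7 : ((A (g y) ∩ A (g y')).card : ℝ)
        ≤ (N + 1 : ℕ) * ((((A (g y)).image f) ∩ ((A (g y')).image f)).card : ℝ) := by
      have := h4.trans (Nat.mul_le_mul_left (N + 1) h5)
      exact_mod_cast this
    calc ((symmDiff ((A (g y)).image f) ((A (g y')).image f)).card : ℝ)
        ≤ ((symmDiff (A (g y)) (A (g y'))).card : ℝ) := Nat.cast_le.mpr h6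
      _ < (ε / (N + 1 : ℕ)) * ((A (g y) ∩ A (g y')).card : ℝ) := h1
      _ ≤ (ε / (N + 1 : ℕ)) *
          ((N + 1 : ℕ) * ((((A (g y)).image f) ∩ ((A (g y')).image f)).card : ℝ)) :=
        mul_le_mul_of_nonneg_left h7 hεk.le
      _ = ε * ((((A (g y)).image f) ∩ ((A (g y')).image f)).card : ℝ) := by
        field_simp
  · intro y z hz
    obtain ⟨a, ha, rfl⟩ := Finset.mem_image.mp hz
    have h1 : dist y (f (g y)) ≤ C := hg y
    have h2 : dist (f (g y)) (f a) ≤ ρp S :=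
      le_trans (hbound (g y) a).2 (hmp (hsupp (g y) a ha))
    calc dist y (f a) ≤ dist y (f (g y)) + dist (f (g y)) (f a) := dist_triangle _ _ _
      _ ≤ C + ρp S := add_le_add h1 h2
      _ ≤ max (C + ρp S) 1 := le_max_left _ _
end

section
/- Let (X,d) be a discrete metric space of bounded geometry. Then X has property A if and only if for every R, ε > 0 there exist a family {a_x}_{x∈X} of non-zero finitely supported functions a_x: X → ℕ and constants S > 0 and L ∈ ℕ such that: (i) for any x,y ∈ X with d(x,y) ≤ R, ‖a_x − a_y‖₁ / ‖a_x ∧ a_y‖₁ < ε, where a ∧ b denotes the pointwise minimum; (ii) supp(a_x) ⊆ B(x,S) for every x ∈ X; and (iii) ‖a_x‖₁ < L for every x ∈ X. -/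
/-- ℓ¹-norm of an ℕ-valued 0-chain: `‖a‖₁ = Σ_x a x`. -/
noncomputable def l1Norm {X : Type*} (a : X →₀ ℕ) : ℕ := a.sum fun _ n => n

/-- ℓ¹-distance `‖a - b‖₁ = Σ_x |a x - b x|` (with `|a x - b x|` computed via truncated
subtraction on ℕ as `(a x - b x) + (b x - a x)`). -/
noncomputable def l1Dist {X : Type*} (a b : X →₀ ℕ) : ℕ := l1Norm ((a - b) + (b - a))

/-- `a ∧ b`: the pointwise minimum of two ℕ-valued 0-chains. -/
noncomputable def chainMin {X : Type*} (a b : X →₀ ℕ) : X →₀ ℕ :=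
  Finsupp.zipWith min (min_self 0) a b

/-- `b(a)`: the characteristic function of the support of `a`. -/
noncomputable def bChain {X : Type*} (a : X →₀ ℕ) : X →₀ ℕ :=
  Finsupp.onFinset a.support (fun x => if a x = 0 then 0 else 1)
    (fun x h => Finsupp.mem_support_iff.mpr (by intro hx; simp [hx] at h))

/-- `t(a) := a - b(a)`. -/
noncomputable def tChain {X : Type*} (a : X →₀ ℕ) : X →₀ ℕ := a - bChain a

/-- The flow map `s₁`: `s₁(a)(x) = b(a)(x) + Σ_{y : σ y = x} t(a)(y)`. -/
noncomputable def flowStep {X : Type*} (σ : X → X) (a : X →₀ ℕ) : X →₀ ℕ :=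
  bChain a + (tChain a).sum fun y n => Finsupp.single (σ y) n

section AuxHelpers

set_option linter.unusedSectionVars false

variable {X : Type*} [DecidableEq X]

lemma l1Norm_eq_sum (a : X →₀ ℕ) {T : Finset X} (h : a.support ⊆ T) :
    l1Norm a = ∑ z ∈ T, a z :=
  Finsupp.sum_of_support_subset a h _ (fun _ _ => rfl)

lemma chainMin_apply (a b : X →₀ ℕ) (z : X) : chainMin a b z = min (a z) (b z) :=
  Finsupp.zipWith_apply

lemma chainMin_support (a b : X →₀ ℕ) : (chainMin a b).support ⊆ a.support := by
  intro z hz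
  simp only [Finsupp.mem_support_iff, chainMin_apply] at hz ⊢
  exact fun h => hz (by simp [h])

lemma natCast_sub_add_sub (a b : ℕ) : ((a - b + (b - a) : ℕ) : ℝ) = |(a : ℝ) - b| := by
  rcases le_total a b with h | h
  · have h2 : |(a:ℝ) - b| = (b:ℝ) - a := by
      rw [abs_sub_comm]; exact abs_of_nonneg (sub_nonneg.2 (Nat.cast_le.2 h))
    rw [h2, Nat.sub_eq_zero_of_le h]; push_cast [Nat.cast_sub h]; ring
  · have h2 : |(a:ℝ) - b| = (a:ℝ) - b := abs_of_nonneg (sub_nonneg.2 (Nat.cast_le.2 h))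
    rw [h2, Nat.sub_eq_zero_of_le h]; push_cast [Nat.cast_sub h]; ring

lemma l1Dist_apply (a b : X →₀ ℕ) (z : X) :
    ((a - b) + (b - a)) z = (a z - b z) + (b z - a z) := by
  simp [Finsupp.tsub_apply]

lemma l1Dist_support (a b : X →₀ ℕ) :
    ((a - b) + (b - a)).support ⊆ a.support ∪ b.support := by
  intro z hz
  simp only [Finsupp.mem_support_iff, l1Dist_apply] at hz
  simp only [Finset.mem_union, Finsupp.mem_support_iff]
  by_contra h
  push_neg at h
  simp [h.1, h.2] at hz

lemma l1Dist_cast (a b : X →₀ ℕ) {T : Finset X} (ha : a.support ⊆ T) (hb : b.support ⊆ T) :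
    (l1Dist a b : ℝ) = ∑ z ∈ T, |(a z : ℝ) - (b z : ℝ)| := by
  rw [l1Dist, l1Norm_eq_sum _ ((l1Dist_support a b).trans (Finset.union_subset ha hb)),
    Nat.cast_sum]
  exact Finset.sum_congr rfl fun z _ => by
    rw [l1Dist_apply, natCast_sub_add_sub]

lemma l1NormMin_cast (a b : X →₀ ℕ) {T : Finset X} (ha : a.support ⊆ T) :
    (l1Norm (chainMin a b) : ℝ) = ∑ z ∈ T, min (a z : ℝ) (b z : ℝ) := by
  rw [l1Norm_eq_sum _ ((chainMin_support a b).trans ha), Nat.cast_sum]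
  exact Finset.sum_congr rfl fun z _ => by rw [chainMin_apply, Nat.cast_min]

lemma l1Norm_cast (a : X →₀ ℕ) {T : Finset X} (h : a.support ⊆ T) :
    (l1Norm a : ℝ) = ∑ z ∈ T, (a z : ℝ) := by
  rw [l1Norm_eq_sum a h, Nat.cast_sum]

/-! ### The set associated to a chain -/

noncomputable def Achain (a : X →₀ ℕ) : Finset (X × ℕ) :=
  a.support.biUnion fun z => (Finset.range (a z)).image fun n => (z, n)

lemma mem_Achain {a : X →₀ ℕ} {p : X × ℕ} : p ∈ Achain a ↔ p.2 < a p.1 := by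
  constructor
  · intro hp
    simp only [Achain, Finset.mem_biUnion, Finset.mem_image, Finset.mem_range] at hp
    obtain ⟨z, _, n, hn, rfl⟩ := hp
    exact hn
  · intro hp
    simp only [Achain, Finset.mem_biUnion, Finset.mem_image, Finset.mem_range]
    exact ⟨p.1, Finsupp.mem_support_iff.2 (lt_of_le_of_lt (Nat.zero_le _) hp).ne',
      p.2, hp, rfl⟩

lemma card_Achain (a : X →₀ ℕ) : (Achain a).card = l1Norm a := by
  rw [Achain, Finset.card_biUnion]
  · refine (Finset.sum_congr rfl fun z _ => ?_).trans
      (Finsupp.sum_of_support_subset a subset_rfl _ (fun _ _ => rfl)).symm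
    rw [Finset.card_image_of_injective _ (fun m n h => by injection h),
      Finset.card_range]
  · intro x _ y _ hxy
    simp only [Finset.disjoint_left, Finset.mem_image, Finset.mem_range]
    rintro p ⟨n, _, rfl⟩ ⟨m, _, h⟩
    have : y = x := by injection h
    exact hxy this.symm

lemma Achain_inter (a b : X →₀ ℕ) : Achain a ∩ Achain b = Achain (chainMin a b) := by
  ext p
  simp [Finset.mem_inter, mem_Achain, chainMin_apply, lt_min_iff]

lemma Achain_sdiff_card (a b : X →₀ ℕ) : ((Achain a) \ (Achain b)).card = l1Norm (a - b) := by
  have h1 : (Achain a ∩ Achain b).card + ((Achain a) \ (Achain b)).card = (Achain a).card :=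
    Finset.card_inter_add_card_sdiff _ _
  rw [Achain_inter, card_Achain, card_Achain] at h1
  have h2 : l1Norm (chainMin a b) + l1Norm (a - b) = l1Norm a := by
    rw [l1Norm, l1Norm, l1Norm, Finsupp.sum_of_support_subset (chainMin a b)
      (show (chainMin a b).support ⊆ a.support ∪ b.support from
        (chainMin_support a b).trans Finset.subset_union_left) _ (fun _ _ => rfl),
      Finsupp.sum_of_support_subset (a - b)
      (show (a - b).support ⊆ a.support ∪ b.support from fun z hz => by
        simp only [Finsupp.mem_support_iff, Finsupp.tsub_apply] at hz
        simp only [Finset.mem_union, Finsupp.mem_support_iff]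
        by_contra h; push_neg at h; simp [h.1, h.2] at hz) _ (fun _ _ => rfl),
      Finsupp.sum_of_support_subset a (Finset.subset_union_left) _ (fun _ _ => rfl),
      ← Finset.sum_add_distrib]
    exact Finset.sum_congr rfl fun z _ => by
      rw [chainMin_apply, Finsupp.tsub_apply]; omega
  omega

lemma Achain_symmDiff_card (a b : X →₀ ℕ) :
    (symmDiff (Achain a) (Achain b)).card = l1Dist a b := by
  rw [symmDiff_def (a := Achain a),
    show (Achain a) \ (Achain b) ⊔ (Achain b) \ (Achain a)
      = ((Achain a) \ (Achain b)) ∪ ((Achain b) \ (Achain a)) from rfl,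
    Finset.card_union_of_disjoint (disjoint_sdiff_sdiff),
    Achain_sdiff_card, Achain_sdiff_card, l1Dist, l1Norm, l1Norm, l1Norm,
    Finsupp.sum_of_support_subset (a - b)
      (Finset.subset_union_left (s₂ := (b-a).support)) _ (fun _ _ => rfl),
    Finsupp.sum_of_support_subset (b - a)
      (Finset.subset_union_right (s₁ := (a-b).support)) _ (fun _ _ => rfl),
    Finsupp.sum_of_support_subset ((a-b)+(b-a)) (Finsupp.support_add) _ (fun _ _ => rfl),
    ← Finset.sum_add_distrib]
  exact Finset.sum_congr rfl fun z _ => by simp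

lemma Achain_nonempty {a : X →₀ ℕ} (h : a ≠ 0) : (Achain a).Nonempty := by
  obtain ⟨z, hz⟩ := Finsupp.support_nonempty_iff.2 h
  exact ⟨(z, 0), mem_Achain.2 (Nat.pos_of_ne_zero (Finsupp.mem_support_iff.1 hz))⟩

/-! ### The chain of multiplicities associated to a set -/

noncomputable def mChain (A : Finset (X × ℕ)) : X →₀ ℕ :=
  Finsupp.onFinset (A.image Prod.fst)
    (fun z => (A.filter fun p => p.1 = z).card)
    (fun z h => by
      obtain ⟨p, hp⟩ := Finset.card_pos.1 (Nat.pos_of_ne_zero h)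
      simp only [Finset.mem_filter] at hp
      exact Finset.mem_image.2 ⟨p, hp.1, hp.2⟩)

lemma mChain_apply (A : Finset (X × ℕ)) (z : X) :
    mChain A z = (A.filter fun p => p.1 = z).card := rfl

lemma mChain_support (A : Finset (X × ℕ)) : (mChain A).support ⊆ A.image Prod.fst :=
  Finsupp.support_onFinset_subset

lemma l1Norm_mChain (A : Finset (X × ℕ)) {T : Finset X} (hT : A.image Prod.fst ⊆ T) :
    l1Norm (mChain A) = A.card := by
  rw [l1Norm_eq_sum _ ((mChain_support A).trans hT)]
  exact (Finset.card_eq_sum_card_fiberwise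
    (fun p hp => hT (Finset.mem_image.2 ⟨p, hp, rfl⟩))).symm

lemma card_inter_le_min (A B : Finset (X × ℕ)) {T : Finset X}
    (hA : A.image Prod.fst ⊆ T) :
    (A ∩ B).card ≤ l1Norm (chainMin (mChain A) (mChain B)) := by
  rw [l1Norm_eq_sum _ ((chainMin_support _ _).trans ((mChain_support A).trans hA)),
    Finset.card_eq_sum_card_fiberwise (f := Prod.fst) (t := T)
      (fun p hp => hA (Finset.mem_image.2 ⟨p, Finset.mem_of_mem_inter_left hp, rfl⟩))]
  refine Finset.sum_le_sum fun z _ => ?_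
  rw [chainMin_apply, mChain_apply, mChain_apply]
  exact le_min
    (Finset.card_le_card (Finset.filter_subset_filter _ (Finset.inter_subset_left)))
    (Finset.card_le_card (Finset.filter_subset_filter _ (Finset.inter_subset_right)))

lemma l1Dist_le_symmDiff (A B : Finset (X × ℕ)) {T : Finset X}
    (hA : A.image Prod.fst ⊆ T) (hB : B.image Prod.fst ⊆ T) :
    l1Dist (mChain A) (mChain B) ≤ (symmDiff A B).card := by
  have hmA := (mChain_support A).trans hA
  have hmB := (mChain_support B).trans hB
  rw [l1Dist, l1Norm_eq_sum _ ((l1Dist_support _ _).trans (Finset.union_subset hmA hmB))]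
  have hABcard : (symmDiff A B).card = (A \ B).card + (B \ A).card := by
    rw [symmDiff_def (a := A)]
    exact Finset.card_union_of_disjoint disjoint_sdiff_sdiff
  rw [hABcard,
    Finset.card_eq_sum_card_fiberwise (f := Prod.fst) (t := T)
      (fun p hp => hA (Finset.mem_image.2 ⟨p, Finset.sdiff_subset hp, rfl⟩)),
    Finset.card_eq_sum_card_fiberwise (f := Prod.fst) (s := B \ A) (t := T)
      (fun p hp => hB (Finset.mem_image.2 ⟨p, Finset.sdiff_subset hp, rfl⟩)),
    ← Finset.sum_add_distrib]
  refine Finset.sum_le_sum fun z _ => ?_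
  rw [l1Dist_apply, mChain_apply, mChain_apply]
  have key : ∀ (C D : Finset (X × ℕ)),
      (C.filter fun p => p.1 = z).card - (D.filter fun p => p.1 = z).card
        ≤ ((C \ D).filter fun p => p.1 = z).card := by
    intro C D
    have hsub : (C.filter fun p => p.1 = z)
        ⊆ (D.filter fun p => p.1 = z) ∪ ((C \ D).filter fun p => p.1 = z) := by
      intro p hp
      simp only [Finset.mem_filter, Finset.mem_union, Finset.mem_sdiff] at hp ⊢
      by_cases hD : p ∈ D
      · exact Or.inl ⟨hD, hp.2⟩
      · exact Or.inr ⟨⟨hp.1, hD⟩, hp.2⟩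
    have := (Finset.card_le_card hsub).trans (Finset.card_union_le _ _)
    omega
  have := key A B
  have := key B A
  omega

/-! ### Elementary real estimates -/

lemma natDiv_lt (m n : ℕ) (hn : 0 < n) : (m:ℝ)/n < (↑(m/n) : ℝ) + 1 := by
  have h : m < (m / n + 1) * n := by
    have := Nat.div_add_mod m n
    nlinarith [Nat.mod_lt m hn]
  have h' : (m:ℝ) < ((↑(m/n) : ℝ) + 1) * n := by exact_mod_cast h
  rw [div_lt_iff₀ (by exact_mod_cast hn : (0:ℝ) < n)]
  linarith

lemma abs_floor_diff {p q s t : ℝ} (h1 : p ≤ s) (h2 : s < p+1) (h3 : q ≤ t) (h4 : t < q+1) :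
    |p - q| ≤ |s - t| + 1 := by
  rw [abs_sub_le_iff]
  constructor
  · linarith [le_abs_self (s - t)]
  · linarith [neg_abs_le (s - t)]

lemma min_eq_half (a b : ℝ) : min a b = (a + b - |a - b|)/2 := by
  rcases le_total a b with h | h
  · rw [min_eq_left h, abs_of_nonpos (by linarith)]; ring
  · rw [min_eq_right h, abs_of_nonneg (by linarith)]; ring

end AuxHelpers

set_option maxHeartbeats 1600000 in
/-- A discrete metric space of bounded geometry has property A if and only if for all
`R, ε > 0` there are a family `{a_x}` of non-zero finitely supported functions
`a_x : X → ℕ`, a constant `S > 0` and an `L ∈ ℕ` such that: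
(i) `‖a_x − a_y‖₁ / ‖a_x ∧ a_y‖₁ < ε` whenever `dist x y ≤ R` (cross-multiplied form);
(ii) `supp(a_x) ⊆ B(x,S)`; and (iii) `‖a_x‖₁ < L`. -/
theorem propertyA_iff_chains (X : Type*) [MetricSpace X] [DecidableEq X]
    (hdisc : UniformlyDiscrete X) (hbg : BoundedGeometry X) :
    HasPropertyA X ↔
      ∀ R : ℝ, 0 < R → ∀ ε : ℝ, 0 < ε →
        ∃ (a : X → (X →₀ ℕ)) (S : ℝ) (L : ℕ), 0 < S ∧
          (∀ x : X, a x ≠ 0) ∧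
          (∀ x y : X, dist x y ≤ R →
            (l1Dist (a x) (a y) : ℝ) < ε * (l1Norm (chainMin (a x) (a y)) : ℝ)) ∧
          (∀ x : X, ∀ z ∈ (a x).support, dist x z ≤ S) ∧
          (∀ x : X, l1Norm (a x) < L) := by
  constructor
  · -- Forward direction: property A gives chains
    intro hA R hR ε hε
    set ε' : ℝ := min (ε/8) (1/2) with hε'def
    have hε'pos : 0 < ε' := lt_min (by positivity) one_half_pos
    have hε'le : ε' ≤ ε/8 := min_le_left _ _
    have hε'half : ε' ≤ 1/2 := min_le_right _ _
    obtain ⟨A, S, hS, hne, hclose, hsupp⟩ := hA R hR ε' hε'pos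
    obtain ⟨N, hN⟩ := hbg S hS
    set m : X → X →₀ ℕ := fun x => mChain (A x) with hm
    -- positivity of the total masses
    have hn : ∀ x, 0 < l1Norm (m x) := by
      intro x
      rw [hm, l1Norm_mChain (A x) subset_rfl]
      exact Finset.card_pos.2 (hne x)
    have hν : ∀ x, (0:ℝ) < (l1Norm (m x) : ℝ) := fun x => by exact_mod_cast hn x
    -- support of m x lies in the S-ball
    have hball : ∀ x, ∀ z ∈ (m x).support, dist x z ≤ S := by
      intro x z hz
      obtain ⟨p, hpA, hpz⟩ := Finset.mem_image.1 (mChain_support (A x) hz)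
      exact hpz ▸ hsupp x p hpA
    have hcard : ∀ x, (m x).support.card ≤ N := by
      intro x
      have h1 := (hN x).1
      have h2 := (hN x).2
      calc (m x).support.card = (((m x).support : Set X)).ncard :=
            (Set.ncard_coe_finset _).symm
        _ ≤ (Metric.closedBall x S).ncard := by
            refine Set.ncard_le_ncard (fun z hz => ?_) h1
            rw [Metric.mem_closedBall, dist_comm]
            exact hball x z (Finset.mem_coe.1 hz)
        _ ≤ N := h2
    -- the scaling constant
    set K : ℕ := max (N+1) ⌈8*(N:ℝ)*(1+ε)/ε⌉₊ with hKdef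
    have hKN : ((N:ℝ)) + 1 ≤ (K:ℝ) := by
      have : N + 1 ≤ K := le_max_left _ _
      exact_mod_cast this
    have hN0 : (0:ℝ) ≤ (N:ℝ) := Nat.cast_nonneg N
    have hK0 : (0:ℝ) < (K:ℝ) := by linarith
    have hKε : 8*(N:ℝ)*(1+ε) ≤ ε * K := by
      have h1 : (⌈8*(N:ℝ)*(1+ε)/ε⌉₊ : ℕ) ≤ K := le_max_right _ _
      have h2 : 8*(N:ℝ)*(1+ε)/ε ≤ (K:ℝ) :=
        le_trans (Nat.le_ceil _) (by exact_mod_cast h1)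
      rw [div_le_iff₀ hε] at h2; linarith
    -- the rescaled chains
    set aa : X → X →₀ ℕ := fun x =>
      Finsupp.mapRange (fun t => K * t / l1Norm (m x)) (by simp) (m x) with haadef
    have haa_apply : ∀ x z, aa x z = K * (m x z) / l1Norm (m x) := fun x z =>
      Finsupp.mapRange_apply
    have haa_supp : ∀ x, (aa x).support ⊆ (m x).support := fun x =>
      Finsupp.support_mapRange
    have hbound : ∀ x z, ((aa x z : ℕ):ℝ) ≤ (K:ℝ)*(m x z)/(l1Norm (m x) : ℝ)
        ∧ (K:ℝ)*(m x z)/(l1Norm (m x) : ℝ) < (aa x z:ℝ) + 1 := by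
      intro x z
      rw [haa_apply]
      constructor
      · calc ((K * m x z / l1Norm (m x) : ℕ):ℝ)
            ≤ ((K * m x z : ℕ):ℝ)/(l1Norm (m x):ℝ) := Nat.cast_div_le
          _ = (K:ℝ)*(m x z)/(l1Norm (m x) : ℝ) := by push_cast; ring
      · have h := natDiv_lt (K * m x z) (l1Norm (m x)) (hn x)
        calc (K:ℝ)*(m x z)/(l1Norm (m x) : ℝ)
            = ((K * m x z : ℕ):ℝ)/(l1Norm (m x):ℝ) := by push_cast; ring
          _ < _ := h
    have hsum : ∀ x, ∀ {T : Finset X}, (m x).support ⊆ T →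
        ∑ z ∈ T, ((m x) z : ℝ) = (l1Norm (m x) : ℝ) := by
      intro x T hT; exact (l1Norm_cast _ hT).symm
    -- upper bound for the mass of aa x
    have hKub : ∀ x, (l1Norm (aa x) : ℝ) ≤ (K:ℝ) := by
      intro x
      rw [l1Norm_cast (aa x) (haa_supp x)]
      calc ∑ z ∈ (m x).support, ((aa x) z : ℝ)
          ≤ ∑ z ∈ (m x).support, (K:ℝ)*(m x z)/(l1Norm (m x) : ℝ) :=
            Finset.sum_le_sum fun z _ => (hbound x z).1
        _ = (K:ℝ) * (∑ z ∈ (m x).support, ((m x) z:ℝ))/(l1Norm (m x) : ℝ) := by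
            rw [← Finset.sum_div, ← Finset.mul_sum]
        _ = K := by rw [hsum x subset_rfl, mul_div_cancel_right₀ _ (hν x).ne']
    have hKlb : ∀ x, (K:ℝ) - N ≤ (l1Norm (aa x):ℝ) := by
      intro x
      rw [l1Norm_cast (aa x) (haa_supp x)]
      have h1 : ∑ z ∈ (m x).support, ((K:ℝ)*(m x z)/(l1Norm (m x) : ℝ) - 1)
          ≤ ∑ z ∈ (m x).support, ((aa x) z : ℝ) :=
        Finset.sum_le_sum fun z _ => by linarith [(hbound x z).2]
      have h2 : ∑ z ∈ (m x).support, ((K:ℝ)*(m x z)/(l1Norm (m x) : ℝ) - 1)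
          = (K:ℝ) - (m x).support.card := by
        rw [Finset.sum_sub_distrib, Finset.sum_const, nsmul_eq_mul, mul_one,
          ← Finset.sum_div, ← Finset.mul_sum, hsum x subset_rfl,
          mul_div_cancel_right₀ _ (hν x).ne']
      have h3 : ((m x).support.card : ℝ) ≤ N := by exact_mod_cast hcard x
      linarith
    refine ⟨aa, S, K + 1, hS, ?_, ?_, ?_, ?_⟩
    · -- nonzero
      intro x hx
      have h1 := hKlb x
      rw [hx] at h1
      have h2 : l1Norm (0 : X →₀ ℕ) = 0 := by simp [l1Norm]
      rw [h2] at h1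
      push_cast at h1
      linarith
    · -- main estimate
      intro x y hxy
      have hT1 : (m x).support ⊆ (m x).support ∪ (m y).support := Finset.subset_union_left
      have hT2 : (m y).support ⊆ (m x).support ∪ (m y).support := Finset.subset_union_right
      set T := (m x).support ∪ (m y).support with hTdef
      set ν₁ : ℝ := (l1Norm (m x) : ℝ) with hν₁def
      set ν₂ : ℝ := (l1Norm (m y) : ℝ) with hν₂def
      have hν₁ : (0:ℝ) < ν₁ := hν x
      have hν₂ : (0:ℝ) < ν₂ := hν y
      have hTcard : (T.card : ℝ) ≤ 2*N := by
        have h1 : T.card ≤ N + N :=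
          le_trans (Finset.card_union_le _ _) (add_le_add (hcard x) (hcard y))
        calc (T.card:ℝ) ≤ ((N+N:ℕ):ℝ) := Nat.cast_le.2 h1
          _ = 2*N := by push_cast; ring
      -- transfer the property A inequality
      have hDM : (l1Dist (m x) (m y) : ℝ) < ε' * (l1Norm (chainMin (m x) (m y)) : ℝ) := by
        have h1 := hclose x y hxy
        have h2 : (l1Dist (m x) (m y):ℝ) ≤ ((symmDiff (A x) (A y)).card : ℝ) :=
          Nat.cast_le.2 (l1Dist_le_symmDiff (A x) (A y)
            (T := (A x).image Prod.fst ∪ (A y).image Prod.fst)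
            Finset.subset_union_left Finset.subset_union_right)
        have h3 : (((A x) ∩ (A y)).card:ℝ) ≤ (l1Norm (chainMin (m x) (m y)) :ℝ) :=
          Nat.cast_le.2 (card_inter_le_min (A x) (A y) subset_rfl)
        calc (l1Dist (m x) (m y) : ℝ) ≤ _ := h2
          _ < ε' * ((A x ∩ A y).card : ℝ) := h1
          _ ≤ ε' * _ := mul_le_mul_of_nonneg_left h3 hε'pos.le
      have hDsum : (l1Dist (m x) (m y):ℝ) = ∑ z ∈ T, |((m x) z:ℝ) - ((m y) z:ℝ)| :=
        l1Dist_cast _ _ hT1 hT2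
      have hMle : (l1Norm (chainMin (m x) (m y)):ℝ) ≤ ν₁ := by
        rw [l1NormMin_cast _ _ hT1]
        calc ∑ z ∈ T, min (((m x) z):ℝ) (((m y) z):ℝ) ≤ ∑ z ∈ T, (((m x) z):ℝ) :=
            Finset.sum_le_sum fun z _ => min_le_left _ _
          _ = ν₁ := hsum x hT1
      have hDν : (l1Dist (m x) (m y):ℝ) < ε' * ν₁ :=
        lt_of_lt_of_le hDM (mul_le_mul_of_nonneg_left hMle hε'pos.le)
      have hsum₁ : ∑ z ∈ T, ((m x) z : ℝ) = ν₁ := hsum x hT1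
      have hsum₂ : ∑ z ∈ T, ((m y) z : ℝ) = ν₂ := hsum y hT2
      have habs : |ν₂ - ν₁| ≤ (l1Dist (m x) (m y):ℝ) := by
        rw [← hsum₁, ← hsum₂, hDsum, abs_sub_comm, ← Finset.sum_sub_distrib]
        exact Finset.abs_sum_le_sum_abs _ _
      have hD0 : (0:ℝ) ≤ (l1Dist (m x) (m y):ℝ) := Nat.cast_nonneg _
      -- comparison of the normalized chains
      have hstep : ∑ z ∈ T, |(K:ℝ)*((m x) z)/ν₁ - (K:ℝ)*((m y) z)/ν₂|
          ≤ 2*(K:ℝ)*((l1Dist (m x) (m y):ℝ)/ν₁) := by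
        have hpt : ∀ z ∈ T, |(K:ℝ)*((m x) z)/ν₁ - (K:ℝ)*((m y) z)/ν₂|
            ≤ (K:ℝ)*|((m x) z:ℝ) - ((m y) z:ℝ)|/ν₁
              + ((m y) z:ℝ)*((K:ℝ)*|ν₂ - ν₁|/(ν₁*ν₂)) := by
          intro z _
          have hid : (K:ℝ)*((m x) z)/ν₁ - (K:ℝ)*((m y) z)/ν₂
              = (K:ℝ)*(((m x) z:ℝ) - ((m y) z:ℝ))/ν₁
                + ((m y) z:ℝ)*((K:ℝ)*(ν₂ - ν₁)/(ν₁*ν₂)) := by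
            field_simp
            ring
          rw [hid]
          refine (abs_add_le _ _).trans (add_le_add ?_ ?_)
          · rw [abs_div, abs_mul, abs_of_nonneg (Nat.cast_nonneg K), abs_of_pos hν₁]
          · have heq : |((m y) z:ℝ)*((K:ℝ)*(ν₂ - ν₁)/(ν₁*ν₂))|
                = ((m y) z:ℝ)*((K:ℝ)*|ν₂ - ν₁|/(ν₁*ν₂)) := by
              rw [abs_mul, abs_div, abs_mul, abs_of_nonneg (Nat.cast_nonneg ((m y) z)),
                abs_of_nonneg (Nat.cast_nonneg K), abs_of_pos (mul_pos hν₁ hν₂)]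
            exact le_of_eq heq
        calc ∑ z ∈ T, |(K:ℝ)*((m x) z)/ν₁ - (K:ℝ)*((m y) z)/ν₂|
            ≤ ∑ z ∈ T, ((K:ℝ)*|((m x) z:ℝ) - ((m y) z:ℝ)|/ν₁
              + ((m y) z:ℝ)*((K:ℝ)*|ν₂ - ν₁|/(ν₁*ν₂))) := Finset.sum_le_sum hpt
          _ = (K:ℝ)*(∑ z ∈ T, |((m x) z:ℝ) - ((m y) z:ℝ)|)/ν₁
              + (∑ z ∈ T, ((m y) z:ℝ))*((K:ℝ)*|ν₂ - ν₁|/(ν₁*ν₂)) := by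
              rw [Finset.sum_add_distrib, ← Finset.sum_div, ← Finset.mul_sum, ← Finset.sum_mul]
          _ = (K:ℝ)*(l1Dist (m x) (m y):ℝ)/ν₁ + (K:ℝ)*|ν₂ - ν₁|/ν₁ := by
              rw [← hDsum, hsum₂]
              field_simp
          _ ≤ (K:ℝ)*(l1Dist (m x) (m y):ℝ)/ν₁ + (K:ℝ)*(l1Dist (m x) (m y):ℝ)/ν₁ := by
              gcongr
          _ = 2*(K:ℝ)*((l1Dist (m x) (m y):ℝ)/ν₁) := by ring
      have hDdiv : (l1Dist (m x) (m y):ℝ)/ν₁ < ε' := (div_lt_iff₀ hν₁).2 (by linarith)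
      have hstep' : ∑ z ∈ T, |(K:ℝ)*((m x) z)/ν₁ - (K:ℝ)*((m y) z)/ν₂| < 2*(K:ℝ)*ε' := by
        have h2K : (0:ℝ) < 2*(K:ℝ) := by linarith
        calc ∑ z ∈ T, |(K:ℝ)*((m x) z)/ν₁ - (K:ℝ)*((m y) z)/ν₂|
            ≤ 2*(K:ℝ)*((l1Dist (m x) (m y):ℝ)/ν₁) := hstep
          _ < 2*(K:ℝ)*ε' := mul_lt_mul_of_pos_left hDdiv h2K
      -- upper bound for the distance of the rescaled chains
      have hLHS : (l1Dist (aa x) (aa y):ℝ) < 2*(K:ℝ)*ε' + 2*N := by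
        rw [l1Dist_cast _ _ ((haa_supp x).trans hT1) ((haa_supp y).trans hT2)]
        have h1 : ∑ z ∈ T, |((aa x) z:ℝ) - ((aa y) z:ℝ)|
            ≤ ∑ z ∈ T, (|(K:ℝ)*((m x) z)/ν₁ - (K:ℝ)*((m y) z)/ν₂| + 1) :=
          Finset.sum_le_sum fun z _ =>
            abs_floor_diff (hbound x z).1 (hbound x z).2 (hbound y z).1 (hbound y z).2
        have h2 : ∑ z ∈ T, (|(K:ℝ)*((m x) z)/ν₁ - (K:ℝ)*((m y) z)/ν₂| + 1)
            = (∑ z ∈ T, |(K:ℝ)*((m x) z)/ν₁ - (K:ℝ)*((m y) z)/ν₂|) + T.card := by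
          rw [Finset.sum_add_distrib, Finset.sum_const, nsmul_eq_mul, mul_one]
        linarith
      -- sums of the normalized values
      have hsums : ∑ z ∈ T, (K:ℝ)*((m x) z)/ν₁ = (K:ℝ) := by
        rw [← Finset.sum_div, ← Finset.mul_sum, hsum₁, mul_div_cancel_right₀ _ hν₁.ne']
      have hsumt : ∑ z ∈ T, (K:ℝ)*((m y) z)/ν₂ = (K:ℝ) := by
        rw [← Finset.sum_div, ← Finset.mul_sum, hsum₂, mul_div_cancel_right₀ _ hν₂.ne']
      have hminsum : ∑ z ∈ T, min ((K:ℝ)*((m x) z)/ν₁) ((K:ℝ)*((m y) z)/ν₂)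
          = (K:ℝ) - (∑ z ∈ T, |(K:ℝ)*((m x) z)/ν₁ - (K:ℝ)*((m y) z)/ν₂|)/2 := by
        rw [Finset.sum_congr rfl (fun z _ => min_eq_half ((K:ℝ)*((m x) z)/ν₁) ((K:ℝ)*((m y) z)/ν₂)),
          ← Finset.sum_div, Finset.sum_sub_distrib, Finset.sum_add_distrib, hsums, hsumt]
        ring
      -- lower bound for the minimum of the rescaled chains
      have hRHS : (K:ℝ) - (K:ℝ)*ε' - 2*N < (l1Norm (chainMin (aa x) (aa y)):ℝ) := by
        rw [l1NormMin_cast _ _ ((haa_supp x).trans hT1)]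
        have h1 : ∀ z ∈ T, min ((K:ℝ)*((m x) z)/ν₁) ((K:ℝ)*((m y) z)/ν₂) - 1
            ≤ min (((aa x) z):ℝ) (((aa y) z):ℝ) := by
          intro z _
          refine le_min ?_ ?_
          · linarith [min_le_left ((K:ℝ)*((m x) z)/ν₁) ((K:ℝ)*((m y) z)/ν₂), (hbound x z).2]
          · linarith [min_le_right ((K:ℝ)*((m x) z)/ν₁) ((K:ℝ)*((m y) z)/ν₂), (hbound y z).2]
        have h2 : ∑ z ∈ T, (min ((K:ℝ)*((m x) z)/ν₁) ((K:ℝ)*((m y) z)/ν₂) - 1)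
            ≤ ∑ z ∈ T, min (((aa x) z):ℝ) (((aa y) z):ℝ) :=
          Finset.sum_le_sum h1
        have h3 : ∑ z ∈ T, (min ((K:ℝ)*((m x) z)/ν₁) ((K:ℝ)*((m y) z)/ν₂) - 1)
            = (K:ℝ) - (∑ z ∈ T, |(K:ℝ)*((m x) z)/ν₁ - (K:ℝ)*((m y) z)/ν₂|)/2 - T.card := by
          rw [Finset.sum_sub_distrib, hminsum, Finset.sum_const, nsmul_eq_mul, mul_one]
        linarith
      -- the numeric inequality
      have hnum : 2*(K:ℝ)*ε' + 2*(N:ℝ) ≤ ε * ((K:ℝ) - (K:ℝ)*ε' - 2*N) := by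
        have e1 : 2*(K:ℝ)*ε' ≤ (K:ℝ)*ε/4 := by
          have := mul_le_mul_of_nonneg_left hε'le (show (0:ℝ) ≤ 2*(K:ℝ) by linarith)
          linarith
        have e2 : (K:ℝ)*ε' ≤ (K:ℝ)/2 := by
          have := mul_le_mul_of_nonneg_left hε'half hK0.le
          linarith
        have e3 : ε * ((K:ℝ)/2 - 2*N) ≤ ε * ((K:ℝ) - (K:ℝ)*ε' - 2*N) :=
          mul_le_mul_of_nonneg_left (by linarith) hε.le
        have e4 : ε * ((K:ℝ)/2 - 2*N) = ε*K/2 - 2*(ε*N) := by ring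
        nlinarith [hKε]
      calc (l1Dist (aa x) (aa y):ℝ) < 2*(K:ℝ)*ε' + 2*N := hLHS
        _ ≤ ε * ((K:ℝ) - (K:ℝ)*ε' - 2*N) := hnum
        _ ≤ ε * (l1Norm (chainMin (aa x) (aa y)):ℝ) :=
          mul_le_mul_of_nonneg_left hRHS.le hε.le
    · -- support condition
      intro x z hz
      exact hball x z (haa_supp x hz)
    · -- mass bound
      intro x
      have h1 := hKub x
      have h2 : (l1Norm (aa x):ℝ) < (K:ℝ) + 1 := by linarith
      exact_mod_cast h2
  · -- Backward direction: chains give property A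
    intro h R hR ε hε
    obtain ⟨a, S, L, hS, hne, hclose, hsupp, _⟩ := h R hR ε hε
    refine ⟨fun x => Achain (a x), S, hS, fun x => Achain_nonempty (hne x), ?_, ?_⟩
    · intro x y hxy
      rw [Achain_symmDiff_card, Achain_inter, card_Achain]
      exact hclose x y hxy
    · intro x p hp
      have := mem_Achain.1 hp
      exact hsupp x p.1 (Finsupp.mem_support_iff.2 (lt_of_le_of_lt (Nat.zero_le _) this).ne')
end

section
/- Let X be a set, σ: X → X a map, and a, b: X → ℕ finitely supported functions. Then ‖s₁(a) − s₁(b)‖₁ ≤ ‖a − b‖₁. -/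
lemma l1Norm_add {X : Type*} (u v : X →₀ ℕ) : l1Norm (u + v) = l1Norm u + l1Norm v :=
  Finsupp.sum_add_index' (fun _ => rfl) (fun _ _ _ => rfl)

lemma l1Norm_mono {X : Type*} {u v : X →₀ ℕ} (h : u ≤ v) : l1Norm u ≤ l1Norm v := by
  have : v = u + (v - u) := by
    ext x
    have := Finsupp.le_def.mp h x
    simp [Finsupp.add_apply, Finsupp.tsub_apply]
    omega
  rw [this, l1Norm_add]; omega

lemma l1Norm_mapDomain {X : Type*} (σ : X → X) (u : X →₀ ℕ) :
    l1Norm (Finsupp.mapDomain σ u) = l1Norm u :=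
  Finsupp.sum_mapDomain_index (fun _ => rfl) (fun _ _ _ => rfl)

lemma mapDomain_tsub_le {X : Type*} (σ : X → X) (u v : X →₀ ℕ) :
    Finsupp.mapDomain σ u - Finsupp.mapDomain σ v ≤ Finsupp.mapDomain σ (u - v) := by
  rw [tsub_le_iff_right, ← Finsupp.mapDomain_add]
  exact Finsupp.mapDomain_mono le_tsub_add

lemma l1Dist_mapDomain_le {X : Type*} (σ : X → X) (u v : X →₀ ℕ) :
    l1Dist (Finsupp.mapDomain σ u) (Finsupp.mapDomain σ v) ≤ l1Dist u v := by
  unfold l1Dist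
  calc l1Norm ((Finsupp.mapDomain σ u - Finsupp.mapDomain σ v) +
        (Finsupp.mapDomain σ v - Finsupp.mapDomain σ u))
      ≤ l1Norm (Finsupp.mapDomain σ (u - v) + Finsupp.mapDomain σ (v - u)) :=
        l1Norm_mono (add_le_add (mapDomain_tsub_le σ u v) (mapDomain_tsub_le σ v u))
    _ = l1Norm ((u - v) + (v - u)) := by
        rw [l1Norm_add, l1Norm_mapDomain, l1Norm_mapDomain, l1Norm_add]

lemma l1Dist_add_add_le {X : Type*} (x x' y y' : X →₀ ℕ) :
    l1Dist (x + y) (x' + y') ≤ l1Dist x x' + l1Dist y y' := by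
  unfold l1Dist
  rw [← l1Norm_add]
  apply l1Norm_mono
  intro z
  simp only [Finsupp.add_apply, Finsupp.tsub_apply]
  omega

lemma bChain_tChain_dist {X : Type*} (a b : X →₀ ℕ) :
    ((bChain a - bChain b) + (bChain b - bChain a)) +
      ((tChain a - tChain b) + (tChain b - tChain a)) = (a - b) + (b - a) := by
  ext x
  simp only [Finsupp.add_apply, Finsupp.tsub_apply, tChain, bChain, Finsupp.onFinset_apply]
  split_ifs <;> omega

/-- The flow map `s₁` does not increase the ℓ¹-distance between ℕ-valued 0-chains. -/
theorem l1Dist_flowStep_le {X : Type*} (σ : X → X) (a b : X →₀ ℕ) :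
    l1Dist (flowStep σ a) (flowStep σ b) ≤ l1Dist a b := by
  have hflow : ∀ c : X →₀ ℕ, flowStep σ c = bChain c + Finsupp.mapDomain σ (tChain c) :=
    fun c => rfl
  rw [hflow, hflow]
  calc l1Dist (bChain a + Finsupp.mapDomain σ (tChain a))
        (bChain b + Finsupp.mapDomain σ (tChain b))
      ≤ l1Dist (bChain a) (bChain b) +
          l1Dist (Finsupp.mapDomain σ (tChain a)) (Finsupp.mapDomain σ (tChain b)) :=
        l1Dist_add_add_le _ _ _ _
    _ ≤ l1Dist (bChain a) (bChain b) + l1Dist (tChain a) (tChain b) := by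
        have := l1Dist_mapDomain_le σ (tChain a) (tChain b); omega
    _ = l1Dist a b := by
        unfold l1Dist
        rw [← l1Norm_add, bChain_tChain_dist]
end

section
/- Let X be a set, σ: X → X a map, and a, b: X → ℕ finitely supported functions. Then ‖a ∧ b‖₁ ≤ ‖s₁(a) ∧ s₁(b)‖₁, where a ∧ b denotes the pointwise minimum. -/
/-!
Pointwise, `b(a) = min a 1` and `t(a) = a - 1`, so `s₁` is monotone; it also preserves the
ℓ¹-norm, since pushing `t(a)` forward along `σ` only moves mass. Hence
`‖a ∧ b‖₁ = ‖s₁(a ∧ b)‖₁ ≤ ‖s₁(a) ∧ s₁(b)‖₁`, because `s₁(a ∧ b)` lies below both `s₁(a)` and `s₁(b)`.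
-/

section

variable {X : Type*}

lemma l1Norm_eq_degree (a : X →₀ ℕ) : l1Norm a = a.degree := rfl

lemma chainMin_eq_inf (a b : X →₀ ℕ) : chainMin a b = a ⊓ b := rfl

lemma bChain_apply (a : X →₀ ℕ) (x : X) : bChain a x = min (a x) 1 := by
  simp only [bChain, Finsupp.onFinset_apply]
  split <;> omega

lemma tChain_apply (a : X →₀ ℕ) (x : X) : tChain a x = a x - 1 := by
  simp only [tChain, Finsupp.tsub_apply, bChain_apply]
  omega

lemma bChain_add_tChain (a : X →₀ ℕ) : bChain a + tChain a = a := by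
  ext x
  simp only [Finsupp.add_apply, bChain_apply, tChain_apply]
  omega

lemma bChain_mono : Monotone (bChain : (X →₀ ℕ) → X →₀ ℕ) := fun a b h x => by
  simpa only [bChain_apply] using min_le_min_right 1 (h x)

lemma tChain_mono : Monotone (tChain : (X →₀ ℕ) → X →₀ ℕ) := fun a b h x => by
  simpa only [tChain_apply] using Nat.sub_le_sub_right (h x) 1

lemma flowStep_eq_add_mapDomain (σ : X → X) (a : X →₀ ℕ) :
    flowStep σ a = bChain a + (tChain a).mapDomain σ := rfl

lemma flowStep_mono (σ : X → X) : Monotone (flowStep σ) := fun a b h => by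
  simp only [flowStep_eq_add_mapDomain]
  exact add_le_add (bChain_mono h) (Finsupp.mapDomain_mono (tChain_mono h))

lemma degree_flowStep (σ : X → X) (a : X →₀ ℕ) : (flowStep σ a).degree = a.degree := by
  rw [flowStep_eq_add_mapDomain, map_add, Finsupp.degree_mapDomain, ← map_add,
    bChain_add_tChain]

end

/-- The flow map `s₁` does not decrease the ℓ¹-norm of the pointwise minimum of two
ℕ-valued 0-chains. -/
theorem l1Norm_chainMin_le_flowStep {X : Type*} (σ : X → X) (a b : X →₀ ℕ) :
    l1Norm (chainMin a b) ≤ l1Norm (chainMin (flowStep σ a) (flowStep σ b)) := by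
  simp only [l1Norm_eq_degree, chainMin_eq_inf]
  calc (a ⊓ b).degree = (flowStep σ (a ⊓ b)).degree := (degree_flowStep σ _).symm
    _ ≤ (flowStep σ a ⊓ flowStep σ b).degree :=
      Finsupp.degree_mono <| le_inf (flowStep_mono σ inf_le_left) (flowStep_mono σ inf_le_right)
end
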